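/- arXiv:2604.21855 — 7 statements merged into one kernel-verified Lean document; each statement's English description precedes it below -/
import Mathlib

section
/- Let H be a family of k-element subsets of [n] with matching number ν(H) ≤ s. Define K_d(H) to be the family of (k-1)-element subsets E of [n] whose codegree d_H(E) = |{F ∈ H : E ⊆ F}| is at least d. Then the matching number of K_{sk+1}(H) is at most s. -/
open Finset

theorem stmt_0 (n k s : ℕ) (hk : 2 ≤ k) (hs : 1 ≤ s)
    (H : Finset (Finset (Fin n))) (hH : ∀ F ∈ H, F.card = k)
    (hν : ∀ M ⊆ H, (∀ A ∈ M, ∀ B ∈ M, A ≠ B → Disjoint A B) → M.card ≤ s) :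
    ∀ M ⊆ (Finset.univ.powersetCard (k - 1)).filter
        (fun E => s * k + 1 ≤ (H.filter (fun F => E ⊆ F)).card),
      (∀ A ∈ M, ∀ B ∈ M, A ≠ B → Disjoint A B) → M.card ≤ s := by
  intro M hM hdisj
  by_contra hcon
  push_neg at hcon
  obtain ⟨M', hM'M, hM'card⟩ := Finset.exists_subset_card_eq hcon
  have hcardE : ∀ E ∈ M', E.card = k - 1 := by
    intro E hE
    have := hM (hM'M hE)
    simp only [mem_filter, mem_powersetCard] at this
    exact this.1.2
  have hdeg : ∀ E ∈ M', s * k + 1 ≤ (H.filter (fun F => E ⊆ F)).card := by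
    intro E hE
    have := hM (hM'M hE)
    simp only [mem_filter] at this
    exact this.2
  have hdisjM' : ∀ A ∈ M', ∀ B ∈ M', A ≠ B → Disjoint A B :=
    fun A hA B hB => hdisj A (hM'M hA) B (hM'M hB)
  have key : ∀ t ⊆ M', ∃ N : Finset (Finset (Fin n)), N ⊆ H ∧ N.card = t.card ∧
      (∀ F₁ ∈ N, ∀ F₂ ∈ N, F₁ ≠ F₂ → Disjoint F₁ F₂) ∧
      (∀ E ∈ t, ∃ F ∈ N, E ⊆ F) ∧
      (∀ F ∈ N, ∃ E ∈ t, E ⊆ F ∧ ∀ E' ∈ M', E' ≠ E → Disjoint F E') := by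
    intro t
    induction t using Finset.induction_on with
    | empty =>
      intro _
      exact ⟨∅, by simp, by simp, by simp, by simp, by simp⟩
    | @insert E₀ t hE₀t ih =>
      intro hins
      have hE₀M' : E₀ ∈ M' := hins (mem_insert_self _ _)
      have htM' : t ⊆ M' := fun x hx => hins (mem_insert_of_mem hx)
      obtain ⟨N, hNH, hNcard, hNdisj, hNsurj, hNprop⟩ := ih htM'
      have hinsM' : insert E₀ t ⊆ M' := hins
      have htcard : t.card ≤ s := by
        have h1 : (insert E₀ t).card = t.card + 1 := card_insert_of_notMem hE₀t
        have h2 : (insert E₀ t).card ≤ M'.card := card_le_card hins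
        omega
      set B : Finset (Fin n) := N.biUnion id ∪ (M' \ insert E₀ t).biUnion id with hBdef
      -- every F ∈ N is contained in B
      have hNB : ∀ F ∈ N, F ⊆ B := by
        intro F hF
        exact (Finset.subset_biUnion_of_mem id hF).trans subset_union_left
      have hrestB : ∀ E' ∈ M' \ insert E₀ t, E' ⊆ B := by
        intro E' hE'
        exact (Finset.subset_biUnion_of_mem id hE').trans subset_union_right
      -- cardinality of B
      have hBcard : B.card ≤ s * k := by
        have c1 : (N.biUnion id).card ≤ t.card * k := by
          calc (N.biUnion id).card ≤ ∑ F ∈ N, (id F).card := card_biUnion_le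
            _ ≤ N.card * k := by
                apply Finset.sum_le_card_nsmul
                intro F hF
                simp [hH F (hNH hF)]
            _ = t.card * k := by rw [hNcard]
        have hsd : (M' \ insert E₀ t).card = s - t.card := by
          rw [card_sdiff_of_subset hinsM', hM'card, card_insert_of_notMem hE₀t]
          omega
        have c2 : ((M' \ insert E₀ t).biUnion id).card ≤ (s - t.card) * (k - 1) := by
          calc ((M' \ insert E₀ t).biUnion id).card
              ≤ ∑ E' ∈ M' \ insert E₀ t, (id E').card := card_biUnion_le
            _ ≤ (M' \ insert E₀ t).card * (k - 1) := by
                apply Finset.sum_le_card_nsmul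
                intro E' hE'
                simp [hcardE E' (sdiff_subset hE')]
            _ = (s - t.card) * (k - 1) := by rw [hsd]
        have : B.card ≤ (N.biUnion id).card + ((M' \ insert E₀ t).biUnion id).card :=
          card_union_le _ _
        have hle : (s - t.card) * (k - 1) ≤ (s - t.card) * k :=
          Nat.mul_le_mul_left _ (Nat.sub_le _ _)
        have : B.card ≤ t.card * k + (s - t.card) * k := by omega
        have heq : t.card * k + (s - t.card) * k = s * k := by
          rw [← Nat.add_mul]
          congr 1
          omega
        omega
      -- E₀ is disjoint from B
      have hE₀B : Disjoint E₀ B := by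
        rw [hBdef, disjoint_union_right, Finset.disjoint_biUnion_right,
          Finset.disjoint_biUnion_right]
        constructor
        · intro F hF
          obtain ⟨E, hEt, _, hall⟩ := hNprop F hF
          have hne : E₀ ≠ E := by rintro rfl; exact hE₀t hEt
          exact (hall E₀ hE₀M' hne).symm
        · intro E' hE'
          have hE'M' : E' ∈ M' := sdiff_subset hE'
          have hne : E₀ ≠ E' := by
            rintro rfl
            exact (mem_sdiff.1 hE').2 (mem_insert_self _ _)
          exact hdisjM' E₀ hE₀M' E' hE'M' hne
      -- find a good extension of E₀
      have hbad : ((H.filter (fun F => E₀ ⊆ F)).filter (fun F => ¬ Disjoint F B)).card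
          ≤ B.card := by
        have : ((H.filter (fun F => E₀ ⊆ F)).filter (fun F => ¬ Disjoint F B)).card
            ≤ (B.image (fun v => ({v} : Finset (Fin n)))).card := by
          apply Finset.card_le_card_of_injOn (fun F => F \ E₀)
          · intro F hF
            simp only [coe_filter, Set.mem_setOf_eq, mem_filter] at hF
            obtain ⟨⟨hFH, hE₀F⟩, hFB⟩ := hF
            have hc1 : (F \ E₀).card = 1 := by
              rw [card_sdiff_of_subset hE₀F, hH F hFH, hcardE E₀ hE₀M']
              omega
            obtain ⟨v, hv⟩ := Finset.card_eq_one.1 hc1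
            obtain ⟨x, hxF, hxB⟩ := Finset.not_disjoint_iff.1 hFB
            have hxE₀ : x ∉ E₀ := fun hx => (Finset.disjoint_left.1 hE₀B) hx hxB
            have hxv : x ∈ F \ E₀ := mem_sdiff.2 ⟨hxF, hxE₀⟩
            rw [hv] at hxv
            simp only [mem_singleton] at hxv
            subst hxv
            exact mem_image.2 ⟨x, hxB, hv.symm⟩
          · intro F₁ hF₁ F₂ hF₂ heq
            simp only at heq
            simp only [coe_filter, Set.mem_setOf_eq, mem_filter] at hF₁ hF₂
            have h1 : E₀ ∪ (F₁ \ E₀) = F₁ := Finset.union_sdiff_of_subset hF₁.1.2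
            have h2 : E₀ ∪ (F₂ \ E₀) = F₂ := Finset.union_sdiff_of_subset hF₂.1.2
            rw [← h1, ← h2, heq]
        exact this.trans Finset.card_image_le
      have hsplit : ((H.filter (fun F => E₀ ⊆ F)).filter (fun F => Disjoint F B)).card
          + ((H.filter (fun F => E₀ ⊆ F)).filter (fun F => ¬ Disjoint F B)).card
          = (H.filter (fun F => E₀ ⊆ F)).card :=
        Finset.card_filter_add_card_filter_not (fun F => Disjoint F B)
      have hgood : 0 < ((H.filter (fun F => E₀ ⊆ F)).filter (fun F => Disjoint F B)).card := by
        have := hdeg E₀ hE₀M'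
        omega
      obtain ⟨F, hF⟩ := Finset.card_pos.1 hgood
      simp only [mem_filter] at hF
      obtain ⟨⟨hFH, hE₀F⟩, hFB⟩ := hF
      have hFN : F ∉ N := by
        intro hFN
        have : Disjoint F F := hFB.mono_right (hNB F hFN)
        have hFe : F = ∅ := by simpa using disjoint_self.1 this
        have := hH F hFH
        rw [hFe] at this
        simp at this
        omega
      refine ⟨insert F N, ?_, ?_, ?_, ?_, ?_⟩
      · exact insert_subset hFH hNH
      · rw [card_insert_of_notMem hFN, card_insert_of_notMem hE₀t, hNcard]
      · intro F₁ hF₁ F₂ hF₂ hne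
        rcases mem_insert.1 hF₁ with rfl | hF₁' <;> rcases mem_insert.1 hF₂ with rfl | hF₂'
        · exact absurd rfl hne
        · exact hFB.mono_right (hNB F₂ hF₂')
        · exact (hFB.mono_right (hNB F₁ hF₁')).symm
        · exact hNdisj F₁ hF₁' F₂ hF₂' hne
      · intro E hE
        rcases mem_insert.1 hE with rfl | hEt
        · exact ⟨F, mem_insert_self _ _, hE₀F⟩
        · obtain ⟨F', hF'N, hEF'⟩ := hNsurj E hEt
          exact ⟨F', mem_insert_of_mem hF'N, hEF'⟩
      · intro F'' hF''
        rcases mem_insert.1 hF'' with rfl | hF''N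
        · refine ⟨E₀, mem_insert_self _ _, hE₀F, ?_⟩
          intro E' hE'M' hne
          have hE'B : E' ⊆ B := by
            by_cases hE't : E' ∈ insert E₀ t
            · rcases mem_insert.1 hE't with rfl | hE't'
              · exact absurd rfl hne
              · obtain ⟨F', hF'N, hEF'⟩ := hNsurj E' hE't'
                exact hEF'.trans (hNB F' hF'N)
            · exact hrestB E' (mem_sdiff.2 ⟨hE'M', hE't⟩)
          exact hFB.mono_right hE'B
        · obtain ⟨E, hEt, hEF, hall⟩ := hNprop F'' hF''N
          exact ⟨E, mem_insert_of_mem hEt, hEF, hall⟩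
  obtain ⟨N, hNH, hNcard, hNdisj, _, _⟩ := key M' Finset.Subset.rfl
  have := hν N hNH hNdisj
  rw [hNcard, hM'card] at this
  omega
end

section
/- Let n, s be positive integers with n ≥ 2s+1, and let H be a family of 2-element subsets of [n] (a graph on n vertices) with matching number ν(H) ≤ s. If every vertex i ∈ [n] has degree d_H({i}) ≤ 2s, then |H| ≤ s(2s+1). -/
open Finset

set_option linter.unusedSectionVars false
variable {V : Type*} [DecidableEq V] [Fintype V]

/-- pairwise disjointness of an edge set -/
def PD (M : Finset (Finset V)) : Prop := ∀ A ∈ M, ∀ B ∈ M, A ≠ B → Disjoint A B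

instance (M : Finset (Finset V)) : Decidable (PD M) := by unfold PD; infer_instance

/-- the finset of matchings contained in H -/
def mats (H : Finset (Finset V)) : Finset (Finset (Finset V)) :=
  H.powerset.filter PD

lemma empty_mem_mats (H : Finset (Finset V)) : ∅ ∈ mats H := by
  simp [mats, PD]

/-- matching number -/
noncomputable def nu (H : Finset (Finset V)) : ℕ :=
  ((mats H).image Finset.card).max' (⟨0, mem_image.2 ⟨∅, empty_mem_mats H, rfl⟩⟩)

lemma card_le_nu {H M : Finset (Finset V)} (hM : M ⊆ H) (hPD : PD M) : M.card ≤ nu H :=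
  Finset.le_max' _ _ (mem_image.2 ⟨M, by simp [mats, hM, hPD], rfl⟩)

lemma exists_max_matching (H : Finset (Finset V)) :
    ∃ M ⊆ H, PD M ∧ M.card = nu H := by
  have h := Finset.max'_mem ((mats H).image Finset.card)
    (⟨0, mem_image.2 ⟨∅, empty_mem_mats H, rfl⟩⟩)
  rw [mem_image] at h
  obtain ⟨M, hM, hc⟩ := h
  simp only [mats, mem_filter, mem_powerset] at hM
  exact ⟨M, hM.1, hM.2, hc⟩

lemma nu_mono {H H' : Finset (Finset V)} (h : H' ⊆ H) : nu H' ≤ nu H := by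
  obtain ⟨M, hM, hPD, hc⟩ := exists_max_matching H'
  exact hc ▸ card_le_nu (hM.trans h) hPD

/-- covered vertex -/
def covered (M : Finset (Finset V)) (v : V) : Prop := ∃ e ∈ M, v ∈ e

instance (M : Finset (Finset V)) (v : V) : Decidable (covered M v) := by
  unfold covered; infer_instance

/-- support -/
def supp (H : Finset (Finset V)) : Finset V := H.biUnion id

lemma mem_supp {H : Finset (Finset V)} {v : V} : v ∈ supp H ↔ ∃ e ∈ H, v ∈ e := by
  simp [supp]

/-- a 2-set containing v is {v,w} -/
lemma pair_struct {e : Finset V} (he : e.card = 2) {v : V} (hv : v ∈ e) :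
    ∃ w, w ≠ v ∧ e = {v, w} := by
  obtain ⟨a, b, hab, rfl⟩ := Finset.card_eq_two.1 he
  rcases Finset.mem_insert.1 hv with rfl | hb
  · exact ⟨b, fun h => hab h.symm, rfl⟩
  · rw [Finset.mem_singleton] at hb
    subst hb
    exact ⟨a, hab, by rw [Finset.pair_comm]⟩

lemma pair_eq {e : Finset V} (he : e.card = 2) {v w : V} (hv : v ∈ e) (hw : w ∈ e)
    (hvw : v ≠ w) : e = {v, w} := by
  obtain ⟨x, hx, hex⟩ := pair_struct he hv
  subst hex
  rcases Finset.mem_insert.1 hw with rfl | h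
  · exact absurd rfl hvw
  · rw [Finset.mem_singleton] at h; subst h; rfl

/-- handshake: sum of degrees = 2 * card, over any finset containing supp -/
lemma handshake {H : Finset (Finset V)} (hH : ∀ F ∈ H, F.card = 2) :
    ∑ v ∈ supp H, (H.filter (fun F => v ∈ F)).card = 2 * H.card := by
  have : ∀ v, (H.filter (fun F => v ∈ F)).card = ∑ F ∈ H, if v ∈ F then 1 else 0 := by
    intro v; rw [Finset.card_filter]
  simp_rw [this]
  rw [Finset.sum_comm]
  have : ∀ F ∈ H, (∑ v ∈ supp H, if v ∈ F then 1 else 0) = 2 := by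
    intro F hF
    rw [← Finset.card_filter]
    have hsub : (supp H).filter (fun v => v ∈ F) = F := by
      apply Finset.Subset.antisymm
      · intro v hv; exact (Finset.mem_filter.1 hv).2
      · intro v hv
        exact Finset.mem_filter.2 ⟨mem_supp.2 ⟨F, hF, hv⟩, hv⟩
    rw [hsub]; exact hH F hF
  rw [Finset.sum_congr rfl this, Finset.sum_const, smul_eq_mul, Nat.mul_comm]

/-- covered vertices of a matching, cardinality -/
lemma card_coveredF {M : Finset (Finset V)} (hM2 : ∀ F ∈ M, F.card = 2) (hPD : PD M) :
    (M.biUnion id).card = 2 * M.card := by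
  rw [Finset.card_biUnion]
  · simp only [id]
    rw [Finset.sum_congr rfl (fun e he => hM2 e he), Finset.sum_const, smul_eq_mul,
      Nat.mul_comm]
  · intro A hA B hB hAB
    exact hPD A hA B hB hAB

/-- partner of v in matching M -/
noncomputable def ptn (M : Finset (Finset V)) (v : V) : Option V :=
  if h : ∃ w, w ≠ v ∧ ({v, w} : Finset V) ∈ M then some h.choose else none

lemma ptn_spec {M : Finset (Finset V)} {v w : V} (h : ptn M v = some w) :
    w ≠ v ∧ ({v, w} : Finset V) ∈ M := by
  unfold ptn at h
  split_ifs at h with h'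
  rw [Option.some_inj] at h; subst h; exact h'.choose_spec

lemma ptn_eq {M : Finset (Finset V)} (hPD : PD M) {v w : V} (hvw : w ≠ v)
    (hm : ({v, w} : Finset V) ∈ M) : ptn M v = some w := by
  unfold ptn
  have h' : ∃ w, w ≠ v ∧ ({v, w} : Finset V) ∈ M := ⟨w, hvw, hm⟩
  rw [dif_pos h']
  congr 1
  obtain ⟨hne, hm'⟩ := h'.choose_spec
  by_contra hne2
  have hd := hPD _ hm' _ hm (by
    intro he
    exact hne2 (by
      have : w ∈ ({v, h'.choose} : Finset V) := he ▸ (by simp)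
      rcases Finset.mem_insert.1 this with h | h
      · exact absurd h hvw
      · exact (Finset.mem_singleton.1 h).symm))
  exact absurd (Finset.disjoint_left.1 hd (by simp) : v ∉ _) (by simp)

lemma pair_struct' {e : Finset V} (he : e.card = 2) {v : V} (hv : v ∈ e) :
    ∃ w, w ≠ v ∧ e = {v, w} := by
  obtain ⟨a, b, hab, rfl⟩ := Finset.card_eq_two.1 he
  rcases Finset.mem_insert.1 hv with rfl | hb
  · exact ⟨b, fun h => hab h.symm, rfl⟩
  · rw [Finset.mem_singleton] at hb
    subst hb
    exact ⟨a, hab, by rw [Finset.pair_comm]⟩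

lemma ptn_covered {M : Finset (Finset V)} (hM2 : ∀ F ∈ M, F.card = 2) {v : V}
    (h : covered M v) : ∃ w, ptn M v = some w := by
  obtain ⟨e, he, hv⟩ := h
  obtain ⟨w, hwv, rfl⟩ := pair_struct' (hM2 e he) hv
  unfold ptn
  rw [dif_pos ⟨w, hwv, he⟩]
  exact ⟨_, rfl⟩

lemma ptn_none {M : Finset (Finset V)} (hM2 : ∀ F ∈ M, F.card = 2) {v : V}
    (h : ptn M v = none) : ¬ covered M v := by
  intro hc
  obtain ⟨w, hw⟩ := ptn_covered hM2 hc
  rw [h] at hw; cases hw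

noncomputable def seqF (M N : Finset (Finset V)) (u : V) : ℕ → Option V
  | 0 => some u
  | (k+1) => (seqF M N u k).bind (fun v => ptn (if k % 2 = 0 then N else M) v)

variable {M N : Finset (Finset V)} {u : V}

lemma seqF_zero : seqF M N u 0 = some u := rfl

lemma seqF_succ (k : ℕ) :
    seqF M N u (k+1) = (seqF M N u k).bind (fun v => ptn (if k % 2 = 0 then N else M) v) :=
  rfl

lemma seqF_def_of_succ {k : ℕ} {w : V} (h : seqF M N u (k+1) = some w) :
    ∃ v, seqF M N u k = some v ∧ ptn (if k % 2 = 0 then N else M) v = some w := by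
  rw [seqF_succ] at h
  cases hk : seqF M N u k with
  | none => rw [hk] at h; cases h
  | some v => rw [hk] at h; exact ⟨v, rfl, h⟩

lemma seqF_defined_le {j : ℕ} {w : V} (h : seqF M N u j = some w) :
    ∀ i ≤ j, ∃ v, seqF M N u i = some v := by
  induction j generalizing w with
  | zero => intro i hi; interval_cases i; exact ⟨w, h⟩
  | succ j ih =>
    intro i hi
    obtain ⟨v, hv, -⟩ := seqF_def_of_succ h
    rcases Nat.lt_succ_iff_lt_or_eq.1 (Nat.lt_succ_of_le hi) with hlt | rfl
    · exact ih hv i (Nat.lt_succ_iff.1 hlt)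
    · exact ⟨w, h⟩

lemma seqF_ptn_succ {i : ℕ} {a b : V} (ha : seqF M N u i = some a)
    (hb : seqF M N u (i+1) = some b) :
    ptn (if i % 2 = 0 then N else M) a = some b := by
  obtain ⟨a', ha', hp⟩ := seqF_def_of_succ hb
  rw [ha] at ha'
  rw [Option.some_inj] at ha'
  subst ha'
  exact hp

lemma ptn_symm {W : Finset (Finset V)} (hW : PD W) {a b : V} (h : ptn W a = some b) :
    ptn W b = some a := by
  obtain ⟨hne, hedge⟩ := ptn_spec h
  exact ptn_eq hW (fun hh => hne hh.symm) (by rwa [Finset.pair_comm])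

/-- injectivity of the alternating sequence -/
lemma seqF_inj (hMPD : PD M) (hNPD : PD N) (hu : ¬ covered M u) :
    ∀ j, ∀ i < j, ∀ v, seqF M N u i = some v → seqF M N u j = some v → False := by
  intro j
  induction j using Nat.strong_induction_on with
  | _ j IH =>
  intro i hij v hi hj
  obtain ⟨j', rfl⟩ : ∃ j', j = j' + 1 := ⟨j - 1, by omega⟩
  obtain ⟨vj, hvj, hptn⟩ := seqF_def_of_succ hj
  set W : Finset (Finset V) := if j' % 2 = 0 then N else M with hWdef
  have hWPD : PD W := by
    rw [hWdef]; split_ifs; exacts [hNPD, hMPD]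
  have hWv : ptn W v = some vj := ptn_symm hWPD hptn
  have hspec := ptn_spec hptn
  cases i with
  | zero =>
    rw [seqF_zero, Option.some_inj] at hi
    subst hi
    by_cases hp : j' % 2 = 0
    · -- W = N
      have hWN : W = N := by rw [hWdef, if_pos hp]
      obtain ⟨v1, hv1⟩ := seqF_defined_le hj 1 (by omega)
      have hptn1 : ptn N u = some v1 := by
        have := seqF_ptn_succ (seqF_zero) hv1
        simpa using this
      rw [hWN] at hWv
      rw [hWv, Option.some_inj] at hptn1
      subst hptn1
      rcases Nat.lt_trichotomy 1 j' with h1 | h1 | h1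
      · exact IH j' (by omega) 1 h1 vj hv1 hvj
      · omega
      · have hj0 : j' = 0 := by omega
        rw [hj0, seqF_zero, Option.some_inj] at hvj
        subst hvj
        exact hspec.1 rfl
    · -- W = M : u is M-covered, contradiction
      have hWM : W = M := by rw [hWdef, if_neg hp]
      rw [hWM] at hspec
      exact hu ⟨_, hspec.2, by simp⟩
  | succ i' =>
    obtain ⟨vi, hvi, hptni⟩ := seqF_def_of_succ hi
    by_cases hpp : i' % 2 = j' % 2
    · -- same parity : backward edges in same matching
      have hWi : (if i' % 2 = 0 then N else M) = W := by
        rw [hWdef, hpp]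
      rw [hWi] at hptni
      have := ptn_symm hWPD hptni
      rw [hWv, Option.some_inj] at this
      subst this
      exact IH j' (by omega) i' (by omega) vj hvi hvj
    · -- opposite parity : use forward edge from v
      by_cases heq : i' + 1 = j'
      · -- then v = vj, contradicting ptn_spec
        apply hspec.1
        rw [← heq] at hvj
        rw [hi, Option.some_inj] at hvj
        exact hvj
      · have hle : i' + 2 ≤ j' := by omega
        obtain ⟨vnext, hvnext⟩ := seqF_defined_le hj (i'+2) (by omega)
        have hptnf : ptn (if (i'+1) % 2 = 0 then N else M) v = some vnext :=
          seqF_ptn_succ hi hvnext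
        have hWf : (if (i'+1) % 2 = 0 then N else M) = W := by
          rw [hWdef]
          have h2 : (i'+1) % 2 = j' % 2 := by omega
          rw [h2]
        rw [hWf, hWv, Option.some_inj] at hptnf
        subst hptnf
        rcases Nat.lt_or_ge (i'+2) j' with hlt | hge
        · exact IH j' (by omega) (i'+2) hlt vj hvnext hvj
        · -- i'+2 = j' : parity contradiction
          omega

/-- edges of the alternating path with index parity p -/
def pathE (vv : ℕ → V) (K p : ℕ) : Finset (Finset V) :=
  ((Finset.range K).filter (fun t => t % 2 = p)).image (fun t => {vv t, vv (t+1)})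

lemma mem_pathE {vv : ℕ → V} {K p : ℕ} {e : Finset V} :
    e ∈ pathE vv K p ↔ ∃ s, s % 2 = p ∧ s < K ∧ e = ({vv s, vv (s+1)} : Finset V) := by
  simp only [pathE, Finset.mem_image, Finset.mem_filter, Finset.mem_range]
  constructor
  · rintro ⟨s, ⟨hs, hp⟩, rfl⟩; exact ⟨s, hp, hs, rfl⟩
  · rintro ⟨s, hp, hs, rfl⟩; exact ⟨s, ⟨hs, hp⟩, rfl⟩

lemma card_filter_parity (K : ℕ) :
    (((Finset.range K).filter (fun t => t % 2 = 0)).card = (K+1)/2) ∧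
    (((Finset.range K).filter (fun t => t % 2 = 1)).card = K/2) := by
  induction K with
  | zero => simp
  | succ K ih =>
    rw [Finset.range_add_one, Finset.filter_insert, Finset.filter_insert]
    rcases Nat.even_or_odd K with h | h
    · rw [Nat.even_iff] at h
      rw [if_pos h, if_neg (by omega), Finset.card_insert_of_notMem (by simp)]
      constructor
      · rw [ih.1]; omega
      · rw [ih.2]; omega
    · rw [Nat.odd_iff] at h
      rw [if_neg (by omega), if_pos h, Finset.card_insert_of_notMem (by simp)]
      constructor
      · rw [ih.1]; omega
      · rw [ih.2]; omega

lemma card_pathE {vv : ℕ → V} {K p : ℕ} (hp : p < 2)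
    (hinj : ∀ s ≤ K, ∀ t ≤ K, vv s = vv t → s = t) :
    (pathE vv K p).card = ((Finset.range K).filter (fun t => t % 2 = p)).card := by
  rw [pathE, Finset.card_image_of_injOn]
  intro s hs t ht h
  simp only [Finset.mem_coe, Finset.mem_filter, Finset.mem_range] at hs ht
  have h' : ({vv s, vv (s+1)} : Finset V) = {vv t, vv (t+1)} := h
  have h1 : vv s ∈ ({vv t, vv (t+1)} : Finset V) := h' ▸ (by simp)
  rcases Finset.mem_insert.1 h1 with h2 | h2
  · exact hinj s (by omega) t (by omega) h2
  · rw [Finset.mem_singleton] at h2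
    have := hinj s (by omega) (t+1) (by omega) h2
    omega

lemma pathE_vert {vv : ℕ → V} {K p : ℕ} {e : Finset V} (he : e ∈ pathE vv K p) {y : V}
    (hy : y ∈ e) : ∃ t ≤ K, y = vv t := by
  obtain ⟨s, _, hs, rfl⟩ := mem_pathE.1 he
  rcases Finset.mem_insert.1 hy with rfl | h
  · exact ⟨s, by omega, rfl⟩
  · rw [Finset.mem_singleton] at h; exact ⟨s+1, by omega, h⟩

/-- the generic swap construction -/
lemma swap_generic {H A B : Finset (Finset V)} (hA : A ⊆ H) (hB : B ⊆ H)
    (hAPD : PD A) (hH2 : ∀ F ∈ H, F.card = 2)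
    (vv : ℕ → V) (K : ℕ) (pA pB : ℕ) (hpA : pA < 2) (hpB : pB < 2) (hpAB : pA ≠ pB)
    (hinj : ∀ s ≤ K, ∀ t ≤ K, vv s = vv t → s = t)
    (hedgeA : ∀ t, t < K → t % 2 = pA → ({vv t, vv (t+1)} : Finset V) ∈ A)
    (hedgeB : ∀ t, t < K → t % 2 = pB → ({vv t, vv (t+1)} : Finset V) ∈ B)
    (hclassA : ∀ t ≤ K, ∀ e ∈ A, vv t ∈ e → e ∈ pathE vv K pA) :
    ((A \ pathE vv K pA) ∪ pathE vv K pB) ⊆ H ∧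
    PD ((A \ pathE vv K pA) ∪ pathE vv K pB) ∧
    ((A \ pathE vv K pA) ∪ pathE vv K pB).card
      = A.card - (pathE vv K pA).card + (pathE vv K pB).card ∧
    (∀ y, covered ((A \ pathE vv K pA) ∪ pathE vv K pB) y →
      (covered A y ∧ ∀ t ≤ K, y ≠ vv t) ∨
      (∃ s, s % 2 = pB ∧ s < K ∧ (y = vv s ∨ y = vv (s+1)))) := by
  set EA := pathE vv K pA with hEA
  set EB := pathE vv K pB with hEB
  -- edges of A outside EA avoid the path
  have havoid : ∀ e ∈ A \ EA, ∀ t ≤ K, vv t ∉ e := by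
    intro e he t ht hv
    rw [Finset.mem_sdiff] at he
    exact he.2 (hclassA t ht e he.1 hv)
  have hEBsub : EB ⊆ H := by
    intro e he
    obtain ⟨s, hs, hsK, rfl⟩ := mem_pathE.1 he
    exact hB (hedgeB s hsK hs)
  have hEAvert : ∀ e ∈ EB, ∀ y ∈ e, ∃ t ≤ K, y = vv t := fun e he y hy => pathE_vert he hy
  refine ⟨?_, ?_, ?_, ?_⟩
  · intro e he
    rcases Finset.mem_union.1 he with h | h
    · exact hA (Finset.mem_sdiff.1 h).1
    · exact hEBsub h
  · -- pairwise disjoint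
    intro X hX Y hY hXY
    rcases Finset.mem_union.1 hX with hX1 | hX2 <;> rcases Finset.mem_union.1 hY with hY1 | hY2
    · exact hAPD X (Finset.mem_sdiff.1 hX1).1 Y (Finset.mem_sdiff.1 hY1).1 hXY
    · rw [Finset.disjoint_right]
      intro y hyY hyX
      obtain ⟨t, ht, rfl⟩ := hEAvert Y hY2 y hyY
      exact havoid X hX1 t ht hyX
    · rw [Finset.disjoint_left]
      intro y hyX hyY
      obtain ⟨t, ht, rfl⟩ := hEAvert X hX2 y hyX
      exact havoid Y hY1 t ht hyY
    · obtain ⟨s, hs, hsK, rfl⟩ := mem_pathE.1 hX2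
      obtain ⟨t, ht, htK, rfl⟩ := mem_pathE.1 hY2
      have hst : s ≠ t := fun h => hXY (by rw [h])
      rw [Finset.disjoint_left]
      intro y hyX hyY
      have h1 : ∃ a ≤ K, y = vv a ∧ (a = s ∨ a = s + 1) := by
        rcases Finset.mem_insert.1 hyX with rfl | h
        · exact ⟨s, by omega, rfl, Or.inl rfl⟩
        · rw [Finset.mem_singleton] at h
          exact ⟨s+1, by omega, h, Or.inr rfl⟩
      have h2 : ∃ a ≤ K, y = vv a ∧ (a = t ∨ a = t + 1) := by
        rcases Finset.mem_insert.1 hyY with rfl | h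
        · exact ⟨t, by omega, rfl, Or.inl rfl⟩
        · rw [Finset.mem_singleton] at h
          exact ⟨t+1, by omega, h, Or.inr rfl⟩
      obtain ⟨a, haK, rfl, hax⟩ := h1
      obtain ⟨b, hbK, hab, hbx⟩ := h2
      have := hinj a haK b hbK hab
      omega
  · -- cardinality
    have hEAA : EA ⊆ A := by
      intro e he
      obtain ⟨s, hs, hsK, rfl⟩ := mem_pathE.1 he
      exact hedgeA s hsK hs
    have hdisj : Disjoint (A \ EA) EB := by
      rw [Finset.disjoint_left]
      intro e he heB
      obtain ⟨s, hs, hsK, rfl⟩ := mem_pathE.1 heB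
      exact havoid _ he s (by omega) (Finset.mem_insert_self _ _)
    rw [Finset.card_union_of_disjoint hdisj, Finset.card_sdiff_of_subset hEAA]
  · -- coverage
    rintro y ⟨e, he, hy⟩
    rcases Finset.mem_union.1 he with h | h
    · left
      refine ⟨⟨e, (Finset.mem_sdiff.1 h).1, hy⟩, ?_⟩
      intro t ht hyt
      exact havoid e h t ht (hyt ▸ hy)
    · right
      obtain ⟨s, hs, hsK, rfl⟩ := mem_pathE.1 h
      rcases Finset.mem_insert.1 hy with rfl | h2
      · exact ⟨s, hs, hsK, Or.inl rfl⟩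
      · rw [Finset.mem_singleton] at h2
        exact ⟨s, hs, hsK, Or.inr h2⟩

lemma exchange {H M N : Finset (Finset V)} (hH2 : ∀ F ∈ H, F.card = 2)
    (hM : M ⊆ H) (hN : N ⊆ H) (hMPD : PD M) (hNPD : PD N)
    (hMmax : ∀ M'' ⊆ H, PD M'' → M''.card ≤ M.card)
    {u : V} (huM : ¬ covered M u) (huN : covered N u) :
    ∃ x : V, x ≠ u ∧ ¬ covered N x ∧ covered M x ∧
      (∃ N', N' ⊆ H ∧ PD N' ∧ N'.card = N.card ∧ ¬ covered N' u ∧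
        (∀ y, ¬ covered N y → covered M y → y ≠ x → ¬ covered N' y) ∧
        M ∩ N ⊂ M ∩ N') ∧
      (∃ M'', M'' ⊆ H ∧ PD M'' ∧ M''.card = M.card ∧ ¬ covered M'' x ∧
        (∀ y, ¬ covered M y → y ≠ u → ¬ covered M'' y)) := by
  classical
  have hM2 : ∀ F ∈ M, F.card = 2 := fun F hF => hH2 F (hM hF)
  have hN2 : ∀ F ∈ N, F.card = 2 := fun F hF => hH2 F (hN hF)
  -- termination
  have hterm : ∃ k, seqF M N u k = none := by
    by_contra hc
    push_neg at hc
    have hdef : ∀ k, ∃ v, seqF M N u k = some v := by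
      intro k
      cases h : seqF M N u k with
      | none => exact absurd h (hc k)
      | some v => exact ⟨v, rfl⟩
    choose f hf using hdef
    have hfinj : Function.Injective fun (k : Fin (Fintype.card V + 1)) => f k := by
      intro a b hab
      simp only at hab
      rcases Nat.lt_trichotomy (a : ℕ) b with h | h | h
      · exact absurd (hf b) (fun hb => seqF_inj hMPD hNPD huM b a h (f a) (hf a) (hab ▸ hb))
      · exact Fin.ext h
      · exact absurd (hf a) (fun ha => seqF_inj hMPD hNPD huM a b h (f b) (hf b) (hab ▸ ha))
    have := Fintype.card_le_of_injective _ hfinj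
    simp only [Fintype.card_fin] at this
    omega
  set T := Nat.find hterm with hTdef
  have hTnone : seqF M N u T = none := Nat.find_spec hterm
  have hTmin : ∀ k, k < T → seqF M N u k ≠ none := fun k hk => Nat.find_min hterm hk
  have hT2 : 2 ≤ T := by
    rcases Nat.lt_or_ge T 2 with h | h
    · interval_cases T
      · rw [seqF_zero] at hTnone; cases hTnone
      · obtain ⟨w, hw⟩ := ptn_covered hN2 huN
        have h1 : seqF M N u 1 = ptn N u := by
          rw [seqF_succ, seqF_zero]
          simp
        rw [h1, hw] at hTnone; cases hTnone
    · exact h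
  set K := T - 1 with hKdef
  have hKT : K + 1 = T := by omega
  have hKnone : seqF M N u (K+1) = none := hKT ▸ hTnone
  obtain ⟨x, hxK⟩ : ∃ x, seqF M N u K = some x := by
    cases h : seqF M N u K with
    | none => exact absurd h (hTmin K (by omega))
    | some v => exact ⟨v, rfl⟩
  obtain ⟨vv, hvv⟩ : ∃ vv : ℕ → V, ∀ t ≤ K, seqF M N u t = some (vv t) := by
    refine ⟨fun t => (seqF M N u t).getD u, ?_⟩
    intro t ht
    obtain ⟨v, hv⟩ := seqF_defined_le hxK t ht
    show seqF M N u t = some ((seqF M N u t).getD u)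
    rw [hv]; rfl
  have hvv0 : vv 0 = u := by
    have := hvv 0 (by omega)
    rw [seqF_zero, Option.some_inj] at this
    exact this.symm
  have hvvK : vv K = x := by
    have := hvv K le_rfl
    rw [hxK, Option.some_inj] at this
    exact this.symm
  have hinj : ∀ s ≤ K, ∀ t ≤ K, vv s = vv t → s = t := by
    intro s hs t ht h
    rcases Nat.lt_trichotomy s t with hlt | he | hlt
    · exact absurd (hvv t ht) (fun hb => seqF_inj hMPD hNPD huM t s hlt (vv s) (hvv s hs) (h ▸ hb))
    · exact he
    · exact absurd (hvv s hs) (fun hb => seqF_inj hMPD hNPD huM s t hlt (vv t) (hvv t ht) (h ▸ hb))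
  -- forward partner identities
  have hfwd : ∀ t, t < K → ptn (if t % 2 = 0 then N else M) (vv t) = some (vv (t+1)) := by
    intro t ht
    exact seqF_ptn_succ (hvv t (by omega)) (hvv (t+1) (by omega))
  have hfwdN : ∀ t, t < K → t % 2 = 0 → ptn N (vv t) = some (vv (t+1)) := by
    intro t ht hp
    have := hfwd t ht
    rwa [if_pos hp] at this
  have hfwdM : ∀ t, t < K → t % 2 = 1 → ptn M (vv t) = some (vv (t+1)) := by
    intro t ht hp
    have := hfwd t ht
    rwa [if_neg (by omega)] at this
  have hedgeN : ∀ t, t < K → t % 2 = 0 → ({vv t, vv (t+1)} : Finset V) ∈ N :=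
    fun t ht hp => (ptn_spec (hfwdN t ht hp)).2
  have hedgeM : ∀ t, t < K → t % 2 = 1 → ({vv t, vv (t+1)} : Finset V) ∈ M :=
    fun t ht hp => (ptn_spec (hfwdM t ht hp)).2
  -- exposure at the end of the path
  have hKend : ptn (if K % 2 = 0 then N else M) x = none := by
    have := hKnone
    rw [seqF_succ, hxK] at this
    simpa using this
  -- classification of M-edges touching the path
  have hclassM : ∀ t ≤ K, ∀ e ∈ M, vv t ∈ e → e ∈ pathE vv K 1 := by
    intro t ht e he hv
    obtain ⟨w, hwne, hew⟩ := pair_struct' (hM2 e he) hv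
    have hptw : ptn M (vv t) = some w := ptn_eq hMPD hwne (hew ▸ he)
    rcases Nat.even_or_odd t with hpt | hpt
    · rw [Nat.even_iff] at hpt
      -- t even : backward edge, t ≠ 0
      rcases Nat.eq_zero_or_pos t with rfl | htpos
      · rw [hvv0] at hv
        exact absurd ⟨e, he, hv⟩ huM
      · have hback : ptn M (vv (t-1)) = some (vv t) := by
          have := hfwdM (t-1) (by omega) (by omega)
          rwa [show t - 1 + 1 = t by omega] at this
        have := ptn_symm hMPD hback
        rw [hptw, Option.some_inj] at this
        subst this
        rw [hew]
        apply mem_pathE.2 ⟨t-1, by omega, by omega, ?_⟩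
        rw [show t - 1 + 1 = t by omega, Finset.pair_comm]
    · rw [Nat.odd_iff] at hpt
      -- t odd : forward edge; t = K impossible
      rcases Nat.lt_or_ge t K with htK | htK
      · have := hfwdM t htK hpt
        rw [hptw, Option.some_inj] at this
        subst this
        rw [hew]
        exact mem_pathE.2 ⟨t, hpt, htK, rfl⟩
      · have htK' : t = K := by omega
        subst htK'
        rw [if_neg (by omega), ← hvvK] at hKend
        rw [hKend] at hptw
        cases hptw
  -- classification of N-edges touching the path
  have hclassN : ∀ t ≤ K, ∀ e ∈ N, vv t ∈ e → e ∈ pathE vv K 0 := by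
    intro t ht e he hv
    obtain ⟨w, hwne, hew⟩ := pair_struct' (hN2 e he) hv
    have hptw : ptn N (vv t) = some w := ptn_eq hNPD hwne (hew ▸ he)
    rcases Nat.even_or_odd t with hpt | hpt
    · rw [Nat.even_iff] at hpt
      -- t even : forward edge; t = K impossible
      rcases Nat.lt_or_ge t K with htK | htK
      · have := hfwdN t htK hpt
        rw [hptw, Option.some_inj] at this
        subst this
        rw [hew]
        exact mem_pathE.2 ⟨t, hpt, htK, rfl⟩
      · have htK' : t = K := by omega
        subst htK'
        rw [if_pos (by omega), ← hvvK] at hKend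
        rw [hKend] at hptw
        cases hptw
    · rw [Nat.odd_iff] at hpt
      -- t odd : backward edge
      have hback : ptn N (vv (t-1)) = some (vv t) := by
        have := hfwdN (t-1) (by omega) (by omega)
        rwa [show t - 1 + 1 = t by omega] at this
      have := ptn_symm hNPD hback
      rw [hptw, Option.some_inj] at this
      subst this
      rw [hew]
      apply mem_pathE.2 ⟨t-1, by omega, by omega, ?_⟩
      rw [show t - 1 + 1 = t by omega, Finset.pair_comm]
  -- cardinalities of path-edge sets
  have hcard0 : (pathE vv K 0).card = (K+1)/2 := by
    rw [card_pathE (by omega) hinj, (card_filter_parity K).1]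
  have hcard1 : (pathE vv K 1).card = K/2 := by
    rw [card_pathE (by omega) hinj, (card_filter_parity K).2]
  have hP1M : pathE vv K 1 ⊆ M := by
    intro e he
    obtain ⟨s, hs, hsK, rfl⟩ := mem_pathE.1 he
    exact hedgeM s hsK hs
  have hP0N : pathE vv K 0 ⊆ N := by
    intro e he
    obtain ⟨s, hs, hsK, rfl⟩ := mem_pathE.1 he
    exact hedgeN s hsK hs
  -- the swap of M : used both for K odd (augmenting) and K even
  obtain ⟨hM'sub, hM'PD, hM'card, hM'cov⟩ :=
    swap_generic hM hN hMPD hH2 vv K 1 0 (by omega) (by omega) (by omega) hinj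
      hedgeM hedgeN hclassM
  -- K must be even
  have hKeven : K % 2 = 0 := by
    by_contra hodd
    have hodd' : K % 2 = 1 := by omega
    have hle := hMmax _ hM'sub hM'PD
    rw [hM'card, hcard0, hcard1] at hle
    have h1 : (pathE vv K 1).card ≤ M.card := Finset.card_le_card hP1M
    rw [hcard1] at h1
    omega
  have hK2 : 2 ≤ K := by omega
  -- facts about x
  have hxN : ¬ covered N x := by
    apply ptn_none hN2
    rwa [if_pos hKeven] at hKend
  have hxM : covered M x := by
    have he := hedgeM (K-1) (by omega) (by omega)
    rw [show K - 1 + 1 = K by omega] at he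
    exact ⟨_, he, by rw [← hvvK]; simp⟩
  have hxu : x ≠ u := by
    intro h
    have := hinj K le_rfl 0 (by omega) (by rw [hvvK, hvv0, h])
    omega
  -- coverage of path vertices
  have hNcov : ∀ t, t < K → covered N (vv t) := by
    intro t ht
    rcases Nat.even_or_odd t with hp | hp
    · rw [Nat.even_iff] at hp
      exact ⟨_, hedgeN t ht hp, by simp⟩
    · rw [Nat.odd_iff] at hp
      refine ⟨_, hedgeN (t-1) (by omega) (by omega), ?_⟩
      rw [show t - 1 + 1 = t by omega]
      simp
  have hMcov : ∀ t, 1 ≤ t → t ≤ K → covered M (vv t) := by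
    intro t h1 h2
    rcases Nat.even_or_odd t with hp | hp
    · rw [Nat.even_iff] at hp
      refine ⟨_, hedgeM (t-1) (by omega) (by omega), ?_⟩
      rw [show t - 1 + 1 = t by omega]
      simp
    · rw [Nat.odd_iff] at hp
      have htK : t < K := by
        rcases Nat.lt_or_ge t K with h | h
        · exact h
        · omega
      exact ⟨_, hedgeM t htK hp, by simp⟩
  -- helper : no edge can be represented with both parities
  have hrep : ∀ s s', s < K → s' < K → s % 2 = 1 → s' % 2 = 0 →
      ({vv s, vv (s+1)} : Finset V) = {vv s', vv (s'+1)} → False := by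
    intro s s' hs hs' hp hp' h
    have h1 : vv s ∈ ({vv s', vv (s'+1)} : Finset V) := by rw [← h]; simp
    have h2 : vv (s+1) ∈ ({vv s', vv (s'+1)} : Finset V) := by rw [← h]; simp
    have hc1 : s = s' ∨ s = s' + 1 := by
      rcases Finset.mem_insert.1 h1 with hh | hh
      · exact Or.inl (hinj s (by omega) s' (by omega) hh)
      · rw [Finset.mem_singleton] at hh
        exact Or.inr (hinj s (by omega) (s'+1) (by omega) hh)
    have hc2 : s + 1 = s' ∨ s + 1 = s' + 1 := by
      rcases Finset.mem_insert.1 h2 with hh | hh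
      · exact Or.inl (hinj (s+1) (by omega) s' (by omega) hh)
      · rw [Finset.mem_singleton] at hh
        exact Or.inr (hinj (s+1) (by omega) (s'+1) (by omega) hh)
    omega
  -- the swap of N
  obtain ⟨hN'sub, hN'PD, hN'card, hN'cov⟩ :=
    swap_generic hN hM hNPD hH2 vv K 0 1 (by omega) (by omega) (by omega) hinj
      hedgeN hedgeM hclassN
  refine ⟨x, hxu, hxN, hxM, ?_, ?_⟩
  · -- the N' part
    refine ⟨(N \ pathE vv K 0) ∪ pathE vv K 1, hN'sub, hN'PD, ?_, ?_, ?_, ?_⟩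
    · -- cardinality
      rw [hN'card, hcard0, hcard1]
      have h1 : (pathE vv K 0).card ≤ N.card := Finset.card_le_card hP0N
      rw [hcard0] at h1
      omega
    · -- misses u
      intro hc
      rcases hN'cov u hc with ⟨-, hne⟩ | ⟨s, hs, hsK, hy⟩
      · exact hne 0 (by omega) hvv0.symm
      · rcases hy with hy | hy
        · have := hinj 0 (by omega) s (by omega) (by rw [hvv0, hy])
          omega
        · have := hinj 0 (by omega) (s+1) (by omega) (by rw [hvv0, hy])
          omega
    · -- misses any N-exposed M-covered y ≠ x
      intro y hyN hyM hyx hc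
      rcases hN'cov y hc with ⟨hcov, -⟩ | ⟨s, hs, hsK, hy⟩
      · exact hyN hcov
      · have hpath : ∃ t ≤ K, y = vv t := by
          rcases hy with hy | hy
          · exact ⟨s, by omega, hy⟩
          · exact ⟨s+1, by omega, hy⟩
        obtain ⟨t, htK, rfl⟩ := hpath
        rcases Nat.eq_zero_or_pos t with rfl | htpos
        · rw [hvv0] at hyM
          exact huM hyM
        · rcases Nat.lt_or_ge t K with ht | ht
          · exact hyN (hNcov t ht)
          · have : t = K := by omega
            subst this
            exact hyx hvvK
    · -- M ∩ N ⊂ M ∩ N'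
      rw [Finset.ssubset_iff_of_subset]
      · refine ⟨{vv 1, vv 2}, ?_, ?_⟩
        · rw [Finset.mem_inter]
          constructor
          · exact hedgeM 1 (by omega) (by omega)
          · apply Finset.mem_union_right
            exact mem_pathE.2 ⟨1, by omega, by omega, rfl⟩
        · rw [Finset.mem_inter]
          rintro ⟨-, h2⟩
          have := hclassN 1 (by omega) _ h2 (by simp)
          obtain ⟨s', hs', hs'K, hrepe⟩ := mem_pathE.1 this
          exact hrep 1 s' (by omega) hs'K (by omega) hs' hrepe
      · -- M ∩ N ⊆ M ∩ N'
        intro e he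
        rw [Finset.mem_inter] at he
        have havoidpath : ∀ t ≤ K, vv t ∉ e := by
          intro t ht hv
          have h1 := hclassM t ht e he.1 hv
          obtain ⟨s, hs, hsK, rfl⟩ := mem_pathE.1 h1
          have h2 := hclassN t ht _ he.2 hv
          obtain ⟨s', hs', hs'K, hrepe⟩ := mem_pathE.1 h2
          exact hrep s s' hsK hs'K hs hs' hrepe
        rw [Finset.mem_inter]
        refine ⟨he.1, Finset.mem_union_left _ ?_⟩
        rw [Finset.mem_sdiff]
        refine ⟨he.2, ?_⟩
        intro hmem
        obtain ⟨s, hs, hsK, rfl⟩ := mem_pathE.1 hmem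
        exact havoidpath s (by omega) (by simp)
  · -- the M'' part
    refine ⟨(M \ pathE vv K 1) ∪ pathE vv K 0, hM'sub, hM'PD, ?_, ?_, ?_⟩
    · -- cardinality
      rw [hM'card, hcard0, hcard1]
      have h1 : (pathE vv K 1).card ≤ M.card := Finset.card_le_card hP1M
      rw [hcard1] at h1
      omega
    · -- misses x
      intro hc
      rcases hM'cov x hc with ⟨-, hne⟩ | ⟨s, hs, hsK, hy⟩
      · exact hne K le_rfl hvvK.symm
      · rcases hy with hy | hy
        · have := hinj K le_rfl s (by omega) (by rw [hvvK, hy])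
          omega
        · have := hinj K le_rfl (s+1) (by omega) (by rw [hvvK, hy])
          omega
    · -- misses any M-exposed y ≠ u
      intro y hyM hyu hc
      rcases hM'cov y hc with ⟨hcov, -⟩ | ⟨s, hs, hsK, hy⟩
      · exact hyM hcov
      · have hpath : ∃ t ≤ K, y = vv t := by
          rcases hy with hy | hy
          · exact ⟨s, by omega, hy⟩
          · exact ⟨s+1, by omega, hy⟩
        obtain ⟨t, htK, rfl⟩ := hpath
        rcases Nat.eq_zero_or_pos t with rfl | htpos
        · exact hyu hvv0
        · exact hyM (hMcov t htpos htK)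

/-! ## the graph structure and Gallai's lemma -/

def GG (H : Finset (Finset V)) : SimpleGraph V :=
  SimpleGraph.fromRel (fun x y => ({x, y} : Finset V) ∈ H)

lemma GG_adj {H : Finset (Finset V)} (hH2 : ∀ F ∈ H, F.card = 2) {x y : V} :
    (GG H).Adj x y ↔ x ≠ y ∧ ({x, y} : Finset V) ∈ H := by
  rw [GG, SimpleGraph.fromRel_adj]
  constructor
  · rintro ⟨hne, h | h⟩
    · exact ⟨hne, h⟩
    · exact ⟨hne, by rwa [Finset.pair_comm]⟩
  · rintro ⟨hne, h⟩
    exact ⟨hne, Or.inl h⟩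

lemma edge_ne {H : Finset (Finset V)} (hH2 : ∀ F ∈ H, F.card = 2) {x y : V}
    (h : ({x, y} : Finset V) ∈ H) : x ≠ y := by
  intro he
  have := hH2 _ h
  subst he
  simp at this

/-- adding an edge with two exposed endpoints to a matching -/
lemma matching_insert {H M : Finset (Finset V)} (hH2 : ∀ F ∈ H, F.card = 2)
    (hM : M ⊆ H) (hPD : PD M) {x y : V} (he : ({x, y} : Finset V) ∈ H)
    (hx : ¬ covered M x) (hy : ¬ covered M y) :
    insert ({x, y} : Finset V) M ⊆ H ∧ PD (insert ({x, y} : Finset V) M) ∧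
      (insert ({x, y} : Finset V) M).card = M.card + 1 := by
  have hnm : ({x, y} : Finset V) ∉ M := fun h => hx ⟨_, h, by simp⟩
  have hdisj : ∀ A ∈ M, Disjoint ({x, y} : Finset V) A := by
    intro A hA
    rw [Finset.disjoint_left]
    intro a ha haA
    rcases Finset.mem_insert.1 ha with rfl | ha'
    · exact hx ⟨A, hA, haA⟩
    · rw [Finset.mem_singleton] at ha'
      subst ha'
      exact hy ⟨A, hA, haA⟩
  refine ⟨?_, ?_, ?_⟩
  · intro e hem
    rcases Finset.mem_insert.1 hem with rfl | h
    · exact he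
    · exact hM h
  · intro A hA B hB hAB
    rcases Finset.mem_insert.1 hA with rfl | hA' <;> rcases Finset.mem_insert.1 hB with rfl | hB'
    · exact absurd rfl hAB
    · exact hdisj B hB'
    · exact (hdisj A hA').symm
    · exact hPD A hA' B hB' hAB
  · exact Finset.card_insert_of_notMem hnm

/-- Gallai : connected + all vertices inessential ⇒ at most 2ν+1 vertices -/
lemma gallai_core {H : Finset (Finset V)} (hH2 : ∀ F ∈ H, F.card = 2)
    (hconn : ∀ x ∈ supp H, ∀ y ∈ supp H, (GG H).Reachable x y)
    (hiness : ∀ v : V, nu (H.filter (fun e => v ∉ e)) = nu H) :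
    (supp H).card ≤ 2 * nu H + 1 := by
  classical
  by_contra hbig
  push_neg at hbig
  -- every maximum matching has two exposed vertices in the support
  have hexpose : ∀ M ⊆ H, PD M → M.card = nu H →
      ∃ u ∈ supp H, ∃ w ∈ supp H, u ≠ w ∧ ¬ covered M u ∧ ¬ covered M w := by
    intro M hMH hPD hcard
    have hcov2 : (M.biUnion id).card = 2 * M.card :=
      card_coveredF (fun F hF => hH2 F (hMH hF)) hPD
    have hsub : M.biUnion id ⊆ supp H := by
      intro v hv
      rw [Finset.mem_biUnion] at hv
      obtain ⟨e, he, hve⟩ := hv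
      exact mem_supp.2 ⟨e, hMH he, hve⟩
    have h2 : 2 ≤ (supp H \ M.biUnion id).card := by
      rw [Finset.card_sdiff_of_subset hsub]
      omega
    obtain ⟨u, hu, w, hw, huw⟩ := Finset.one_lt_card.1 h2
    rw [Finset.mem_sdiff] at hu hw
    refine ⟨u, hu.1, w, hw.1, huw, ?_, ?_⟩
    · intro ⟨e, he, hue⟩
      exact hu.2 (Finset.mem_biUnion.2 ⟨e, he, hue⟩)
    · intro ⟨e, he, hwe⟩
      exact hw.2 (Finset.mem_biUnion.2 ⟨e, he, hwe⟩)
  -- the set of distances realized by exposed pairs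
  have hex : ∃ d, ∃ M ⊆ H, PD M ∧ M.card = nu H ∧ ∃ u ∈ supp H, ∃ w ∈ supp H,
      u ≠ w ∧ ¬ covered M u ∧ ¬ covered M w ∧ (GG H).dist u w = d := by
    obtain ⟨M, hMH, hPD, hcard⟩ := exists_max_matching H
    obtain ⟨u, hu, w, hw, huw, hcu, hcw⟩ := hexpose M hMH hPD hcard
    exact ⟨_, M, hMH, hPD, hcard, u, hu, w, hw, huw, hcu, hcw, rfl⟩
  obtain ⟨M, hMH, hMPD, hMcard, u, hu, w, hw, huw, hcu, hcw, hdist⟩ := Nat.find_spec hex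
  set d := Nat.find hex with hddef
  have hfindmin : ∀ d' < d, ¬ (∃ M ⊆ H, PD M ∧ M.card = nu H ∧ ∃ u ∈ supp H, ∃ w ∈ supp H,
      u ≠ w ∧ ¬ covered M u ∧ ¬ covered M w ∧ (GG H).dist u w = d') :=
    fun d' hd' => Nat.find_min hex hd'
  have hMmax : ∀ M'' ⊆ H, PD M'' → M''.card ≤ M.card := by
    intro M'' h1 h2
    rw [hMcard]
    exact card_le_nu h1 h2
  -- d ≥ 2
  have hreach_uw : (GG H).Reachable u w := hconn u hu w hw
  have hd0 : d ≠ 0 := by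
    intro h0
    rw [h0] at hdist
    exact huw (by
      by_contra hne
      have := SimpleGraph.Reachable.pos_dist_of_ne hreach_uw hne
      omega)
  have hd1 : d ≠ 1 := by
    intro h1
    rw [h1] at hdist
    obtain ⟨p, hp⟩ := hreach_uw.exists_walk_length_eq_dist
    rw [hdist] at hp
    -- p is a walk of length 1 : u adjacent to w
    have hadj : (GG H).Adj u w := by
      cases p with
      | nil => simp at hp
      | cons h q =>
        cases q with
        | nil => exact h
        | cons h' q' => simp at hp
    have hedge := (GG_adj hH2).1 hadj
    obtain ⟨hsub, hPD, hcard⟩ := matching_insert hH2 hMH hMPD hedge.2 hcu hcw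
    have := hMmax _ hsub hPD
    omega
  have hd2 : 2 ≤ d := by omega
  -- second vertex of a geodesic
  obtain ⟨p, hp⟩ := hreach_uw.exists_walk_length_eq_dist
  obtain ⟨z, hadjuz, q, hq⟩ : ∃ z, (GG H).Adj u z ∧ ∃ q : (GG H).Walk z w, q.length = d - 1 := by
    cases p with
    | nil => rw [hdist] at hp; simp at hp; omega
    | cons h q =>
      refine ⟨_, h, q, ?_⟩
      rw [hdist] at hp
      simp only [SimpleGraph.Walk.length_cons] at hp
      omega
  have hzu : z ≠ u := fun h => (GG H).irrefl (h ▸ hadjuz)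
  have hedgeuz := (GG_adj hH2).1 hadjuz
  have hzsupp : z ∈ supp H := mem_supp.2 ⟨_, hedgeuz.2, by simp⟩
  have hdistzw : (GG H).dist z w = d - 1 := by
    have hle : (GG H).dist z w ≤ d - 1 := hq ▸ SimpleGraph.dist_le q
    have hge : d - 1 ≤ (GG H).dist z w := by
      obtain ⟨q', hq'⟩ := (hconn z hzsupp w hw).exists_walk_length_eq_dist
      have : (GG H).dist u w ≤ (SimpleGraph.Walk.cons hadjuz q').length :=
        SimpleGraph.dist_le _
      simp only [SimpleGraph.Walk.length_cons] at this
      omega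
    omega
  have hzw : z ≠ w := by
    intro h
    rw [h] at hdistzw
    have : (GG H).dist w w = 0 := by simp
    omega
  -- z is covered by M
  have hzM : covered M z := by
    by_contra hzM
    exact hfindmin (d-1) (by omega)
      ⟨M, hMH, hMPD, hMcard, z, hzsupp, w, hw, hzw, hzM, hcw, hdistzw⟩
  -- choose N : a maximum matching missing z, maximizing |M ∩ N|
  have hTne : ∃ N, N ⊆ H ∧ PD N ∧ N.card = nu H ∧ ¬ covered N z := by
    obtain ⟨N₀, hN₀, hPD₀, hcard₀⟩ := exists_max_matching (H.filter (fun e => z ∉ e))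
    refine ⟨N₀, fun e he => Finset.mem_filter.1 (hN₀ he) |>.1, hPD₀, ?_, ?_⟩
    · rw [hcard₀, hiness z]
    · rintro ⟨e, he, hze⟩
      exact (Finset.mem_filter.1 (hN₀ he)).2 hze
  -- the finset of candidates for N
  set T : Finset (Finset (Finset V)) :=
    (mats H).filter (fun N => N.card = nu H ∧ ¬ covered N z) with hTdef
  have hTne' : T.Nonempty := by
    obtain ⟨N₀, h1, h2, h3, h4⟩ := hTne
    exact ⟨N₀, Finset.mem_filter.2 ⟨Finset.mem_filter.2
      ⟨Finset.mem_powerset.2 h1, h2⟩, h3, h4⟩⟩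
  obtain ⟨N, hNT, hNmax⟩ := Finset.exists_max_image T (fun N => (M ∩ N).card) hTne'
  have hNH : N ⊆ H := Finset.mem_powerset.1 (Finset.mem_filter.1 (Finset.mem_filter.1 hNT).1).1
  have hNPD : PD N := (Finset.mem_filter.1 (Finset.mem_filter.1 hNT).1).2
  have hNcard : N.card = nu H := (Finset.mem_filter.1 hNT).2.1
  have hNz : ¬ covered N z := (Finset.mem_filter.1 hNT).2.2
  -- N covers u
  have hNu : covered N u := by
    by_contra hNu
    obtain ⟨hsub, hPD, hcard⟩ := matching_insert hH2 hNH hNPD hedgeuz.2 hNu hNz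
    have := card_le_nu hsub hPD
    rw [hcard, hNcard] at this
    omega
  -- N covers w
  have hNw : covered N w := by
    by_contra hNw
    refine hfindmin (d-1) (by omega)
      ⟨N, hNH, hNPD, hNcard, w, hw, z, hzsupp, fun h => hzw h.symm, hNw, hNz, ?_⟩
    rw [SimpleGraph.dist_comm]
    exact hdistzw
  -- apply the exchange lemma
  obtain ⟨x, hxu, hxN, hxM, ⟨N', hN'H, hN'PD, hN'card, hN'u, hN'miss, hN'gain⟩,
    ⟨M'', hM''H, hM''PD, hM''card, hM''x, hM''miss⟩⟩ :=
    exchange hH2 hMH hNH hMPD hNPD hMmax hcu hNu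
  by_cases hxz : x = z
  · -- use M'' : misses z and w, giving a closer exposed pair
    subst hxz
    refine hfindmin (d-1) (by omega)
      ⟨M'', hM''H, hM''PD, by rw [hM''card, hMcard], w, hw, x, hzsupp,
        fun h => hzw h.symm, hM''miss w hcw (fun h => huw h.symm), hM''x, ?_⟩
    rw [SimpleGraph.dist_comm]
    exact hdistzw
  · -- use N' : contradicts the maximality of |M ∩ N|
    have hN'z : ¬ covered N' z := hN'miss z hNz hzM (fun h => hxz h.symm)
    have hN'T : N' ∈ T := Finset.mem_filter.2 ⟨Finset.mem_filter.2
      ⟨Finset.mem_powerset.2 hN'H, hN'PD⟩, by rw [hN'card, hNcard], hN'z⟩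
    have hle := hNmax N' hN'T
    have hlt := Finset.card_lt_card hN'gain
    omega
lemma nu_pos {H : Finset (Finset V)} (hne : H.Nonempty) : 1 ≤ nu H := by
  obtain ⟨e, he⟩ := hne
  have : ({e} : Finset (Finset V)).card ≤ nu H := by
    apply card_le_nu
    · intro x hx; rw [Finset.mem_singleton] at hx; subst hx; exact he
    · intro A hA B hB hAB
      rw [Finset.mem_singleton] at hA hB
      subst hA; subst hB
      exact absurd rfl hAB
  simpa using this

lemma main_lemma (D : ℕ) : ∀ (m : ℕ) (H : Finset (Finset V)), H.card ≤ m →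
    (∀ F ∈ H, F.card = 2) → (∀ v : V, (H.filter (fun F => v ∈ F)).card ≤ D) →
    H.card ≤ nu H * (D + 1) := by
  intro m
  induction m with
  | zero =>
    intro H hm _ _
    simp only [Nat.le_zero, Finset.card_eq_zero] at hm
    subst hm
    simp
  | succ m IH =>
    intro H hm hH2 hdeg
    classical
    rcases Finset.eq_empty_or_nonempty H with rfl | hne
    · simp
    have hnu1 : 1 ≤ nu H := nu_pos hne
    by_cases hess : ∃ v : V, nu (H.filter (fun e => v ∉ e)) < nu H
    · -- essential vertex case
      obtain ⟨v, hv⟩ := hess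
      set Hv := H.filter (fun e => v ∉ e) with hHv
      have hsubv : Hv ⊆ H := Finset.filter_subset _ _
      have hne' : Hv ≠ H := by
        intro h
        rw [h] at hv
        omega
      have hlt : Hv.card < H.card := Finset.card_lt_card (ssubset_of_subset_of_ne hsubv hne')
      have hIH := IH Hv (by omega) (fun F hF => hH2 F (hsubv hF))
        (fun w => le_trans (Finset.card_le_card (Finset.filter_subset_filter _ hsubv)) (hdeg w))
      have hsplit : (H.filter (fun e => v ∈ e)).card + Hv.card = H.card := by
        rw [hHv]
        exact Finset.card_filter_add_card_filter_not (fun e => v ∈ e)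
      have hdv := hdeg v
      obtain ⟨b, hb⟩ : ∃ b, nu H = b + 1 := ⟨nu H - 1, by omega⟩
      have hnuv : nu Hv ≤ b := by omega
      have h1 : Hv.card ≤ b * (D + 1) :=
        le_trans hIH (Nat.mul_le_mul_right _ hnuv)
      have h2 : nu H * (D + 1) = b * (D + 1) + (D + 1) := by
        rw [hb, Nat.succ_mul]
      omega
    · push_neg at hess
      have hiness : ∀ v : V, nu (H.filter (fun e => v ∉ e)) = nu H :=
        fun v => le_antisymm (nu_mono (Finset.filter_subset _ _)) (hess v)
      by_cases hconn : ∀ x ∈ supp H, ∀ y ∈ supp H, (GG H).Reachable x y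
      · -- connected, all inessential : Gallai + counting
        have hsupp := gallai_core hH2 hconn hiness
        rcases Nat.lt_or_ge D (2 * nu H) with hD | hD
        · -- small D : handshake bound
          have hhs := handshake hH2
          have hsum : ∑ v ∈ supp H, (H.filter (fun F => v ∈ F)).card
              ≤ (supp H).card * D := by
            calc ∑ v ∈ supp H, (H.filter (fun F => v ∈ F)).card
                ≤ ∑ _v ∈ supp H, D := Finset.sum_le_sum (fun v _ => hdeg v)
              _ = (supp H).card * D := by rw [Finset.sum_const, smul_eq_mul]
          have h2 : (supp H).card * D ≤ (2 * nu H + 1) * D :=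
            Nat.mul_le_mul_right _ hsupp
          obtain ⟨P, hP⟩ : ∃ P, nu H * D = P := ⟨_, rfl⟩
          have h3 : (2 * nu H + 1) * D = 2 * P + D := by rw [← hP]; ring
          have h4 : nu H * (D + 1) = P + nu H := by rw [← hP]; ring
          omega
        · -- large D : count pairs within the support
          have hsub : H ⊆ Finset.powersetCard 2 (supp H) := by
            intro e he
            rw [Finset.mem_powersetCard]
            exact ⟨fun x hx => mem_supp.2 ⟨e, he, hx⟩, hH2 e he⟩
          have h1 : H.card ≤ ((supp H).card).choose 2 := by
            have := Finset.card_le_card hsub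
            rwa [Finset.card_powersetCard] at this
          have h2 : ((supp H).card).choose 2 ≤ (2 * nu H + 1).choose 2 :=
            Nat.choose_le_choose 2 hsupp
          have h3 : (2 * nu H + 1).choose 2 = nu H * (2 * nu H + 1) := by
            rw [Nat.choose_two_right]
            have e1 : 2 * nu H + 1 - 1 = 2 * nu H := by omega
            rw [e1]
            have e2 : (2 * nu H + 1) * (2 * nu H) = nu H * (2 * nu H + 1) * 2 := by ring
            rw [e2, Nat.mul_div_cancel _ (by norm_num)]
          have h4 : nu H * (2 * nu H + 1) ≤ nu H * (D + 1) :=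
            Nat.mul_le_mul_left _ (by omega)
          obtain ⟨Q, hQ⟩ : ∃ Q, nu H * (2 * nu H + 1) = Q := ⟨_, rfl⟩
          obtain ⟨R, hR⟩ : ∃ R, nu H * (D + 1) = R := ⟨_, rfl⟩
          rw [hR]
          rw [hQ] at h3 h4
          rw [hR] at h4
          omega
      · -- disconnected : split into two parts
        push_neg at hconn
        obtain ⟨a, ha, b, hb, hnr⟩ := hconn
        set H₁ := H.filter (fun e => ∃ x ∈ e, (GG H).Reachable a x) with hH₁
        set H₂ := H.filter (fun e => ¬ ∃ x ∈ e, (GG H).Reachable a x) with hH₂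
        have hcl : ∀ e ∈ H, ∀ x ∈ e, ∀ y ∈ e, (GG H).Reachable a x → (GG H).Reachable a y := by
          intro e he x hx y hy hr
          rcases eq_or_ne x y with rfl | hxy
          · exact hr
          · have hexy : e = {x, y} := pair_eq (hH2 e he) hx hy hxy
            have hadj : (GG H).Adj x y := (GG_adj hH2).2 ⟨hxy, hexy ▸ he⟩
            exact hr.trans hadj.reachable
        have hsub1 : H₁ ⊆ H := Finset.filter_subset _ _
        have hsub2 : H₂ ⊆ H := Finset.filter_subset _ _
        have hne1 : H₁.Nonempty := by
          obtain ⟨e, he, hae⟩ := mem_supp.1 ha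
          exact ⟨e, Finset.mem_filter.2 ⟨he, a, hae, SimpleGraph.Reachable.refl a⟩⟩
        have hne2 : H₂.Nonempty := by
          obtain ⟨e, he, hbe⟩ := mem_supp.1 hb
          refine ⟨e, Finset.mem_filter.2 ⟨he, ?_⟩⟩
          rintro ⟨x, hx, hr⟩
          exact hnr (hcl e he x hx b hbe hr)
        have hsplit : H₁.card + H₂.card = H.card :=
          Finset.card_filter_add_card_filter_not _
        have hIH1 := IH H₁ (by have := hne2.card_pos; omega) (fun F hF => hH2 F (hsub1 hF))
          (fun w => le_trans (Finset.card_le_card (Finset.filter_subset_filter _ hsub1)) (hdeg w))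
        have hIH2 := IH H₂ (by have := hne1.card_pos; omega) (fun F hF => hH2 F (hsub2 hF))
          (fun w => le_trans (Finset.card_le_card (Finset.filter_subset_filter _ hsub2)) (hdeg w))
        -- superadditivity of nu
        have hsuper : nu H₁ + nu H₂ ≤ nu H := by
          obtain ⟨M₁, hM₁, hPD₁, hc₁⟩ := exists_max_matching H₁
          obtain ⟨M₂, hM₂, hPD₂, hc₂⟩ := exists_max_matching H₂
          have hM₁vert : ∀ A ∈ M₁, ∀ x ∈ A, (GG H).Reachable a x := by
            intro A hA x hx
            have := Finset.mem_filter.1 (hM₁ hA)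
            obtain ⟨y, hy, hr⟩ := this.2
            exact hcl A this.1 y hy x hx hr
          have hM₂vert : ∀ A ∈ M₂, ∀ x ∈ A, ¬ (GG H).Reachable a x := by
            intro A hA x hx hr
            have := Finset.mem_filter.1 (hM₂ hA)
            exact this.2 ⟨x, hx, hr⟩
          have hdisjM : Disjoint M₁ M₂ := by
            rw [Finset.disjoint_left]
            intro A hA1 hA2
            have h2 := hH2 A (hsub1 (hM₁ hA1))
            have : A.Nonempty := Finset.card_pos.1 (by omega)
            obtain ⟨x, hx⟩ := this
            exact hM₂vert A hA2 x hx (hM₁vert A hA1 x hx)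
          have hPDu : PD (M₁ ∪ M₂) := by
            intro A hA B hB hAB
            rcases Finset.mem_union.1 hA with hA' | hA' <;>
              rcases Finset.mem_union.1 hB with hB' | hB'
            · exact hPD₁ A hA' B hB' hAB
            · rw [Finset.disjoint_left]
              intro x hxA hxB
              exact hM₂vert B hB' x hxB (hM₁vert A hA' x hxA)
            · rw [Finset.disjoint_left]
              intro x hxA hxB
              exact hM₂vert A hA' x hxA (hM₁vert B hB' x hxB)
            · exact hPD₂ A hA' B hB' hAB
          have hsubu : M₁ ∪ M₂ ⊆ H := by
            intro e he
            rcases Finset.mem_union.1 he with h | h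
            · exact hsub1 (hM₁ h)
            · exact hsub2 (hM₂ h)
          have := card_le_nu hsubu hPDu
          rwa [Finset.card_union_of_disjoint hdisjM, hc₁, hc₂] at this
        have h1 : (nu H₁ + nu H₂) * (D + 1) ≤ nu H * (D + 1) :=
          Nat.mul_le_mul_right _ hsuper
        have h2 : (nu H₁ + nu H₂) * (D + 1) = nu H₁ * (D + 1) + nu H₂ * (D + 1) :=
          Nat.add_mul _ _ _
        omega

theorem stmt_1 (n s : ℕ) (hs : 1 ≤ s) (hn : 2 * s + 1 ≤ n)
    (H : Finset (Finset (Fin n))) (hH : ∀ F ∈ H, F.card = 2)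
    (hν : ∀ M ⊆ H, (∀ A ∈ M, ∀ B ∈ M, A ≠ B → Disjoint A B) → M.card ≤ s)
    (hdeg : ∀ i : Fin n, (H.filter (fun F => i ∈ F)).card ≤ 2 * s) :
    H.card ≤ s * (2 * s + 1) := by
  have hmain := main_lemma (2 * s) H.card H le_rfl hH hdeg
  have hnus : nu H ≤ s := by
    obtain ⟨M, hM, hPD, hcard⟩ := exists_max_matching H
    rw [← hcard]
    exact hν M hM hPD
  calc H.card ≤ nu H * (2 * s + 1) := hmain
    _ ≤ s * (2 * s + 1) := Nat.mul_le_mul_right _ hnus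
end

section
/- Let a, b, c, n, p, m be integers with 0 < b < a, 0 ≤ c < n, c·a < m < c·a + (n-c)·b, and p ≥ 2. Let x_1 ≥ x_2 ≥ ... ≥ x_n be a non-increasing sequence of natural numbers with ∑_{i=1}^n x_i ≤ m, 0 ≤ x_i ≤ a for 1 ≤ i ≤ c, and 0 ≤ x_i ≤ b for c+1 ≤ i ≤ n. Then ∑_{i=1}^n x_i^p ≤ c·a^p + (m - c·a)·b^{p-1}. -/
open Finset

lemma sum_if_lt (n c v : ℕ) (hc : c ≤ n) :
    ∑ i : Fin n, (if (i : ℕ) < c then v else 0) = c * v := by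
  rw [Fin.sum_univ_eq_sum_range (fun k => if k < c then v else 0) n]
  rw [Finset.sum_ite, Finset.sum_const, Finset.sum_const_zero, add_zero, smul_eq_mul]
  have hf : Finset.filter (fun i => i < c) (Finset.range n) = Finset.range c := by
    ext i
    simp only [Finset.mem_filter, Finset.mem_range]
    omega
  rw [hf, Finset.card_range]

theorem stmt_2 (a b c n p m : ℕ) (hb : 0 < b) (hba : b < a) (hc : c < n)
    (hm1 : c * a < m) (hm2 : m < c * a + (n - c) * b) (hp : 2 ≤ p)
    (x : Fin n → ℕ) (hmono : ∀ i j : Fin n, i ≤ j → x j ≤ x i)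
    (hsum : ∑ i, x i ≤ m)
    (hxa : ∀ i : Fin n, (i : ℕ) < c → x i ≤ a)
    (hxb : ∀ i : Fin n, c ≤ (i : ℕ) → x i ≤ b) :
    ∑ i, (x i) ^ p ≤ c * a ^ p + (m - c * a) * b ^ (p - 1) := by
  set B := b ^ (p - 1) with hB
  have hpq : p = (p - 1) + 1 := by omega
  -- per-index inequality
  have key : ∀ i : Fin n,
      x i ^ p + (if (i : ℕ) < c then a else 0) * B
        ≤ (if (i : ℕ) < c then a ^ p else 0) + x i * B := by
    intro i
    by_cases h : (i : ℕ) < c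
    · simp only [h, if_true]
      have hx : x i ≤ a := hxa i h
      have h1 : x i ^ p ≤ x i * a ^ (p - 1) := by
        calc x i ^ p = x i * x i ^ (p - 1) := by
              rw [hpq, Nat.add_sub_cancel, pow_succ, mul_comm]
        _ ≤ x i * a ^ (p - 1) := by
            exact Nat.mul_le_mul_left _ (Nat.pow_le_pow_left hx _)
      have h2 : B ≤ a ^ (p - 1) := Nat.pow_le_pow_left (le_of_lt hba) _
      have h3 : x i * a ^ (p - 1) + a * B ≤ x i * B + a * a ^ (p - 1) :=
        mul_add_mul_le_mul_add_mul hx h2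
      have h4 : a * a ^ (p - 1) = a ^ p := by
        conv_rhs => rw [hpq]
        rw [pow_succ, mul_comm]
      omega
    · simp only [h, if_false]
      have hx : x i ≤ b := hxb i (by omega)
      have h1 : x i ^ p ≤ x i * B := by
        calc x i ^ p = x i * x i ^ (p - 1) := by
              rw [hpq, Nat.add_sub_cancel, pow_succ, mul_comm]
        _ ≤ x i * B := Nat.mul_le_mul_left _ (Nat.pow_le_pow_left hx _)
      omega
  have hsumkey := Finset.sum_le_sum (fun i (_ : i ∈ Finset.univ) => key i)
  rw [Finset.sum_add_distrib, Finset.sum_add_distrib, ← Finset.sum_mul,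
    ← Finset.sum_mul, sum_if_lt n c a (le_of_lt hc),
    sum_if_lt n c (a ^ p) (le_of_lt hc)] at hsumkey
  have h5 : (∑ i, x i) * B ≤ m * B := Nat.mul_le_mul_right B hsum
  have h6 : c * a * B ≤ m * B := Nat.mul_le_mul_right B (le_of_lt hm1)
  have h7 : (m - c * a) * B = m * B - c * a * B := Nat.sub_mul m (c * a) B
  omega
end

section
/- Let H be a family of 3-element subsets of [n] with matching number ν(H) = s. If the pair {i,j} has codegree d_H({i,j}) ≥ 3s+1 (i.e., at least 3s+1 sets of H contain both i and j), then the family H_{ī,j̄} = {F ∈ H : i ∉ F and j ∉ F} has matching number at most s-1. -/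
open Finset

theorem stmt_4 (n s : ℕ)
    (H : Finset (Finset (Fin n))) (hH : ∀ F ∈ H, F.card = 3)
    (hex : ∃ M ⊆ H, (∀ A ∈ M, ∀ B ∈ M, A ≠ B → Disjoint A B) ∧ M.card = s)
    (hub : ∀ M ⊆ H, (∀ A ∈ M, ∀ B ∈ M, A ≠ B → Disjoint A B) → M.card ≤ s)
    (i j : Fin n) (hij : i ≠ j)
    (hcod : 3 * s + 1 ≤ (H.filter (fun F => i ∈ F ∧ j ∈ F)).card) :
    ∀ M ⊆ H.filter (fun F => i ∉ F ∧ j ∉ F),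
      (∀ A ∈ M, ∀ B ∈ M, A ≠ B → Disjoint A B) → M.card ≤ s - 1 := by
  intro M hM hmatch
  by_contra hlt
  push_neg at hlt
  have hMH : M ⊆ H := hM.trans (filter_subset _ _)
  have hMs : M.card ≤ s := hub M hMH hmatch
  have hs : M.card = s := le_antisymm hMs (by omega)
  set T := H.filter (fun F => i ∈ F ∧ j ∈ F) with hTdef
  set U := M.biUnion id with hUdef
  have hijsub : ∀ F ∈ T, ({i, j} : Finset (Fin n)) ⊆ F := by
    intro F hF z hz
    rcases mem_filter.mp hF with ⟨_, hi, hj⟩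
    simp only [mem_insert, mem_singleton] at hz
    rcases hz with rfl | rfl <;> assumption
  have hcard1 : ∀ F ∈ T, (F \ ({i, j} : Finset (Fin n))).card = 1 := by
    intro F hF
    rw [card_sdiff_of_subset (hijsub F hF), hH F (mem_filter.mp hF).1,
      card_insert_of_notMem (by simp [hij]), card_singleton]
  have hUcard : U.card ≤ 3 * s := by
    calc U.card ≤ ∑ A ∈ M, (id A).card := card_biUnion_le
    _ = ∑ _A ∈ M, 3 := Finset.sum_congr rfl fun A hA => by simp [hH A (hMH hA)]
    _ = 3 * s := by rw [Finset.sum_const, hs]; ring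
  have key : ∃ F ∈ T, ∀ A ∈ M, Disjoint F A := by
    by_contra hkey
    push_neg at hkey
    have hsub : ∀ F ∈ T, F \ ({i, j} : Finset (Fin n)) ⊆ U := by
      intro F hF
      obtain ⟨A, hA, hnd⟩ := hkey F hF
      rw [Finset.not_disjoint_iff] at hnd
      obtain ⟨x, hxF, hxA⟩ := hnd
      have hAavoid : i ∉ A ∧ j ∉ A := (mem_filter.mp (hM hA)).2
      have hxdiff : x ∈ F \ ({i, j} : Finset (Fin n)) := by
        simp only [mem_sdiff, mem_insert, mem_singleton]
        refine ⟨hxF, ?_⟩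
        rintro (rfl | rfl)
        · exact hAavoid.1 hxA
        · exact hAavoid.2 hxA
      intro y hy
      obtain ⟨a, ha⟩ := Finset.card_eq_one.mp (hcard1 F hF)
      rw [ha, mem_singleton] at hy hxdiff
      subst hy; subst hxdiff
      exact mem_biUnion.mpr ⟨A, hA, hxA⟩
    -- F ↦ F \ {i,j} is injective on T
    have hinj : Set.InjOn (· \ ({i, j} : Finset (Fin n))) T := by
      intro F hF F' hF' h
      simp only at h
      ext z
      by_cases hz : z ∈ ({i, j} : Finset (Fin n))
      · simp [hijsub F hF hz, hijsub F' hF' hz]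
      · constructor <;> intro hzF
        · have : z ∈ F' \ ({i, j} : Finset (Fin n)) := by
            rw [← h]; exact mem_sdiff.mpr ⟨hzF, hz⟩
          exact (mem_sdiff.mp this).1
        · have : z ∈ F \ ({i, j} : Finset (Fin n)) := by
            rw [h]; exact mem_sdiff.mpr ⟨hzF, hz⟩
          exact (mem_sdiff.mp this).1
    set T' := T.image (· \ ({i, j} : Finset (Fin n))) with hT'def
    have hT'card : T'.card = T.card := card_image_of_injOn hinj
    have hT'1 : ∀ S ∈ T', S.card = 1 := by
      intro S hS
      obtain ⟨F, hF, rfl⟩ := mem_image.mp hS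
      exact hcard1 F hF
    have hdisj : ∀ S ∈ T', ∀ S' ∈ T', S ≠ S' → Disjoint (id S) (id S') := by
      intro S hS S' hS' hne
      obtain ⟨a, ha⟩ := Finset.card_eq_one.mp (hT'1 S hS)
      obtain ⟨b, hb⟩ := Finset.card_eq_one.mp (hT'1 S' hS')
      subst ha; subst hb
      simp only [id_eq, disjoint_singleton]
      intro h; exact hne (by rw [h])
    have hbU : T'.biUnion id ⊆ U := by
      intro z hz
      obtain ⟨S, hS, hzS⟩ := mem_biUnion.mp hz
      obtain ⟨F, hF, rfl⟩ := mem_image.mp hS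
      exact hsub F hF hzS
    have : T.card ≤ U.card := by
      calc T.card = T'.card := hT'card.symm
      _ = ∑ S ∈ T', 1 := by
          rw [Finset.sum_const, smul_eq_mul, mul_one]
      _ = ∑ S ∈ T', (id S).card := Finset.sum_congr rfl fun S hS => by
          simp [hT'1 S hS]
      _ = (T'.biUnion id).card := (card_biUnion hdisj).symm
      _ ≤ U.card := card_le_card hbU
    omega
  obtain ⟨F, hFT, hFdisj⟩ := key
  have hiF : i ∈ F := (mem_filter.mp hFT).2.1
  have hFnotM : F ∉ M := fun h => (mem_filter.mp (hM h)).2.1 hiF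
  have hbig : (insert F M).card ≤ s := by
    apply hub
    · intro A hA
      rcases mem_insert.mp hA with rfl | hA
      · exact (mem_filter.mp hFT).1
      · exact hMH hA
    · intro A hA B hB hne
      have hA' := mem_insert.mp hA
      have hB' := mem_insert.mp hB
      rcases hA' with rfl | hA' <;> rcases hB' with rfl | hB'
      · exact absurd rfl hne
      · exact hFdisj B hB'
      · exact (hFdisj A hA').symm
      · exact hmatch A hA' B hB' hne
  rw [card_insert_of_notMem hFnotM, hs] at hbig
  omega
end

section
/- Let H_{n,3,s} = {F ∈ C([n],3) : F ∩ [s] ≠ ∅} and for a family H of 3-subsets define co_p(H) = ∑_{E ∈ C([n],2)} d_H(E)^p where d_H(E) is the number of members of H containing E. Then for positive integers n, s, p with n ≥ s: co_p(H_{n,3,s}) = (n-1)(n-2)^p + ∑_{i=0}^{p} C(p,i) · co_i(H_{n-1,3,s-1}). -/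
open Finset

/-- The family `H_{n,3,s}` of 3-subsets of `[n]` meeting `[s]` (as subsets of `Fin n`,
with `[s]` identified with `{0, 1, ..., s-1}`). -/
def Hfam (n s : ℕ) : Finset (Finset (Fin n)) :=
  (Finset.univ.powersetCard 3).filter (fun F => ∃ x ∈ F, (x : ℕ) < s)

/-- The `ℓ_p`-norm `co_p(H) = ∑_{E ∈ C([n],2)} d_H(E)^p`. -/
def coP (n p : ℕ) (H : Finset (Finset (Fin n))) : ℕ :=
  ∑ E ∈ Finset.univ.powersetCard 2, ((H.filter (fun F => E ⊆ F)).card) ^ p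

lemma card_sup {N k : ℕ} (E : Finset (Fin N)) (hE : E.card = k) :
    (((univ : Finset (Fin N)).powersetCard (k+1)).filter (fun F => E ⊆ F)).card = N - k := by
  have h1 : ((univ : Finset (Fin N)) \ E).card = N - k := by
    rw [card_sdiff_of_subset (subset_univ E), hE, card_univ, Fintype.card_fin]
  rw [← h1]
  symm
  apply card_bij (fun y _ => insert y E)
  · intro y hy
    simp only [mem_sdiff, mem_univ, true_and] at hy
    simp only [mem_filter, mem_powersetCard, subset_univ, true_and]
    exact ⟨by rw [card_insert_of_notMem hy, hE], subset_insert _ _⟩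
  · intro y hy y' hy' h
    simp only [mem_sdiff, mem_univ, true_and] at hy hy'
    have : y ∈ insert y' E := h ▸ mem_insert_self y E
    rcases mem_insert.1 this with h' | h'
    · exact h'
    · exact absurd h' hy
  · intro F hF
    simp only [mem_filter, mem_powersetCard, subset_univ, true_and] at hF
    obtain ⟨hcard, hsub⟩ := hF
    have hne : (F \ E).Nonempty := by
      rw [← card_pos, card_sdiff_of_subset hsub, hE, hcard]; omega
    obtain ⟨y, hy⟩ := hne
    refine ⟨y, by simpa using (mem_sdiff.1 hy).2, ?_⟩
    apply eq_of_subset_of_card_le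
    · exact insert_subset (mem_sdiff.1 hy).1 hsub
    · rw [hcard, card_insert_of_notMem (mem_sdiff.1 hy).2, hE]

lemma univ_map_succ (m : ℕ) :
    (univ : Finset (Fin m)).map (Fin.succEmb m) = ({0}ᶜ : Finset (Fin (m+1))) := by
  ext y
  simp only [mem_map, mem_univ, true_and, mem_compl, mem_singleton, Fin.coe_succEmb]
  exact Fin.exists_succ_eq

lemma deg_split {m t : ℕ} (E' : Finset (Fin m)) (hE' : E'.card = 2) :
    ((Hfam (m+1) (t+1)).filter (fun F => E'.map (Fin.succEmb m) ⊆ F)).card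
      = ((Hfam m t).filter (fun F => E' ⊆ F)).card + 1 := by
  set E := E'.map (Fin.succEmb m) with hEdef
  have hzE : (0 : Fin (m+1)) ∉ E := by
    simp only [hEdef, mem_map, Fin.coe_succEmb]
    rintro ⟨x, -, hx⟩
    exact Fin.succ_ne_zero x hx
  have hcardE : E.card = 2 := by rw [hEdef, card_map, hE']
  have key : (Hfam (m+1) (t+1)).filter (fun F => E ⊆ F)
      = insert (insert 0 E)
          (((Hfam m t).filter (fun F => E' ⊆ F)).map (mapEmbedding (Fin.succEmb m)).toEmbedding) := by
    ext F
    simp only [Hfam, mem_filter, mem_powersetCard, subset_univ, true_and, mem_insert,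
      mem_map, RelEmbedding.coe_toEmbedding, mapEmbedding_apply]
    constructor
    · rintro ⟨⟨hc, hmeet⟩, hEF⟩
      by_cases h0 : (0 : Fin (m+1)) ∈ F
      · left
        have hsub : insert 0 E ⊆ F := insert_subset h0 hEF
        have := eq_of_subset_of_card_le hsub
          (by rw [hc, card_insert_of_notMem hzE, hcardE])
        exact this.symm
      · right
        have hFc : F ∈ ((univ : Finset (Fin m)).map (Fin.succEmb m)).powersetCard 3 := by
          rw [univ_map_succ, mem_powersetCard]
          refine ⟨fun y hy => ?_, hc⟩
          simp only [mem_compl, mem_singleton]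
          rintro rfl; exact h0 hy
        rw [powersetCard_map, mem_map] at hFc
        obtain ⟨F', hF', hFF'⟩ := hFc
        simp only [RelEmbedding.coe_toEmbedding, mapEmbedding_apply] at hFF'
        subst hFF'
        refine ⟨F', ⟨⟨by simpa using (mem_powersetCard.1 hF').2, ?_⟩,
          (map_subset_map).1 hEF⟩, rfl⟩
        obtain ⟨x, hx, hxt⟩ := hmeet
        rw [mem_map] at hx
        obtain ⟨x', hx', rfl⟩ := hx
        exact ⟨x', hx', by simpa [Fin.val_succ] using hxt⟩
    · rintro (rfl | ⟨F', ⟨⟨hc, hmeet⟩, hEF⟩, rfl⟩)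
      · exact ⟨⟨by rw [card_insert_of_notMem hzE, hcardE], 0, mem_insert_self _ _, by simp⟩,
          subset_insert _ _⟩
      · refine ⟨⟨by simp [hc], ?_⟩, map_subset_map.2 hEF⟩
        obtain ⟨x', hx', hxt⟩ := hmeet
        exact ⟨(Fin.succEmb m) x', mem_map_of_mem _ hx', by simp [Fin.val_succ]; omega⟩
  rw [key, card_insert_of_notMem, card_map]
  rw [mem_map]
  rintro ⟨F', -, hF'⟩
  simp only [RelEmbedding.coe_toEmbedding, mapEmbedding_apply] at hF'
  have : (0 : Fin (m+1)) ∈ F'.map (Fin.succEmb m) := hF' ▸ mem_insert_self _ _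
  rw [mem_map] at this
  obtain ⟨x, -, hx⟩ := this
  exact Fin.succ_ne_zero x hx

lemma deg0 {m t : ℕ} (E : Finset (Fin (m+1))) (h0 : (0 : Fin (m+1)) ∈ E) :
    (Hfam (m+1) (t+1)).filter (fun F => E ⊆ F)
      = ((univ : Finset (Fin (m+1))).powersetCard 3).filter (fun F => E ⊆ F) := by
  ext F
  simp only [Hfam, mem_filter, mem_powersetCard, subset_univ, true_and]
  refine ⟨fun h => ⟨h.1.1, h.2⟩, fun h => ⟨⟨h.1, 0, h.2 h0, by simp⟩, h.2⟩⟩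

lemma card_filter0 (m : ℕ) :
    (((univ : Finset (Fin (m+1))).powersetCard 2).filter
      (fun E => (0 : Fin (m+1)) ∈ E)).card = m := by
  have : (((univ : Finset (Fin (m+1))).powersetCard 2).filter
      (fun E => (0 : Fin (m+1)) ∈ E))
      = (((univ : Finset (Fin (m+1))).powersetCard (1+1)).filter
      (fun E => ({0} : Finset (Fin (m+1))) ⊆ E)) := by
    simp only [singleton_subset_iff]
  rw [this, card_sup _ (card_singleton _)]
  omega

lemma pairs_not0 (m : ℕ) :
    ((univ : Finset (Fin (m+1))).powersetCard 2).filter (fun E => (0 : Fin (m+1)) ∉ E)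
      = ((univ : Finset (Fin m)).powersetCard 2).map (mapEmbedding (Fin.succEmb m)).toEmbedding := by
  rw [← powersetCard_map, univ_map_succ]
  ext E
  simp only [mem_filter, mem_powersetCard, subset_univ, true_and]
  constructor
  · rintro ⟨hc, h0⟩
    exact ⟨fun y hy => by simp only [mem_compl, mem_singleton]; rintro rfl; exact h0 hy, hc⟩
  · rintro ⟨hsub, hc⟩
    exact ⟨hc, fun h0 => by simpa using hsub h0⟩

theorem stmt_6 (n s p : ℕ) (hn : 1 ≤ n) (hs : 1 ≤ s) (hp : 1 ≤ p) (hns : s ≤ n) :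
    coP n p (Hfam n s) =
      (n - 1) * (n - 2) ^ p +
        ∑ i ∈ Finset.range (p + 1), p.choose i * coP (n - 1) i (Hfam (n - 1) (s - 1)) := by
  obtain ⟨m, rfl⟩ : ∃ m, n = m + 1 := ⟨n - 1, by omega⟩
  obtain ⟨t, rfl⟩ : ∃ t, s = t + 1 := ⟨s - 1, by omega⟩
  simp only [Nat.add_sub_cancel]
  have h2 : m + 1 - 2 = m - 1 := by omega
  rw [h2]
  unfold coP
  rw [← sum_filter_add_sum_filter_not ((univ : Finset (Fin (m+1))).powersetCard 2)
    (fun E => (0 : Fin (m+1)) ∈ E)]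
  congr 1
  · have hterm : ∀ E ∈ ((univ : Finset (Fin (m+1))).powersetCard 2).filter
        (fun E => (0 : Fin (m+1)) ∈ E),
        ((Hfam (m+1) (t+1)).filter (fun F => E ⊆ F)).card ^ p = (m - 1) ^ p := by
      intro E hE
      rw [mem_filter, mem_powersetCard] at hE
      rw [deg0 E hE.2, card_sup E hE.1.2, h2]
    rw [sum_congr rfl hterm, sum_const, card_filter0, smul_eq_mul]
  · rw [pairs_not0, sum_map]
    simp only [RelEmbedding.coe_toEmbedding, mapEmbedding_apply]
    have hterm : ∀ E' ∈ (univ : Finset (Fin m)).powersetCard 2,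
        ((Hfam (m+1) (t+1)).filter (fun F => E'.map (Fin.succEmb m) ⊆ F)).card ^ p
          = ∑ i ∈ Finset.range (p + 1),
              p.choose i * ((Hfam m t).filter (fun F => E' ⊆ F)).card ^ i := by
      intro E' hE'
      rw [mem_powersetCard] at hE'
      rw [deg_split E' hE'.2, add_pow]
      refine Finset.sum_congr rfl fun i _ => ?_
      rw [one_pow, mul_one, mul_comm, Nat.cast_id]
    refine (sum_congr rfl hterm).trans ?_
    rw [sum_comm]
    refine Finset.sum_congr rfl fun i _ => ?_
    rw [mul_sum]
    rfl
end

section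
/- For integers s ≥ 2, p ≥ 2, and n ≥ 7s + 6, one has s(2s+1)(n-2)^p + (3·C(n,3) − 3·C(n-s,3) − s(2s+1)(n-2))·(3s)^{p-1} < (C(n,2) − C(n-s,2))·(n-2)^p. -/
lemma ch2 (m : ℕ) : (m.choose 2 : ℤ) * 2 = m * (m - 1) := by
  induction m with
  | zero => simp
  | succ k ih =>
    rw [Nat.choose_succ_succ, Nat.choose_one_right]
    push_cast
    push_cast at ih
    linarith [ih]

lemma ch3 (m : ℕ) : (m.choose 3 : ℤ) * 6 = m * (m - 1) * (m - 2) := by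
  induction m with
  | zero => simp
  | succ k ih =>
    rw [Nat.choose_succ_succ]
    push_cast
    push_cast at ih
    have h2 := ch2 k
    push_cast at h2
    nlinarith [ih, h2]

lemma aux_base (x y : ℤ) (hy : 2 ≤ y) (hx : 7 * y + 6 ≤ x) :
    0 < 2*x^3 - 11*x^2 - 14*x^2*y + 20*x + 44*x*y + 21*x*y^2
        - 3*y^3 - 33*y^2 - 38*y - 12 := by
  obtain ⟨k, hk⟩ : ∃ k : ℤ, x = 7*y + 6 + k ∧ 0 ≤ k := ⟨x - 7*y - 6, by ring_nf, by linarith⟩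
  obtain ⟨hk1, hk2⟩ := hk
  obtain ⟨u, hu⟩ : ∃ u : ℤ, y = 2 + u ∧ 0 ≤ u := ⟨y - 2, by ring_nf, by linarith⟩
  obtain ⟨hu1, hu2⟩ := hu
  subst hk1 hu1
  nlinarith [mul_nonneg hk2 hu2, mul_nonneg (mul_nonneg hk2 hk2) hk2,
    mul_nonneg (mul_nonneg hu2 hu2) hu2, mul_nonneg hk2 hk2, mul_nonneg hu2 hu2,
    mul_nonneg (mul_nonneg hk2 hk2) hu2, mul_nonneg (mul_nonneg hk2 hu2) hu2]

lemma aux_B (x y : ℤ) (hy : 2 ≤ y) (hx : 7 * y + 6 ≤ x) :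
    0 ≤ 3*x^2 - (7*y + 8)*x + y^2 + 11*y + 6 := by
  nlinarith [mul_nonneg (by nlinarith : (0:ℤ) ≤ x) (by nlinarith : (0:ℤ) ≤ x - 7*y - 6),
    mul_nonneg (by nlinarith : (0:ℤ) ≤ y) (by nlinarith : (0:ℤ) ≤ x - 7*y - 6)]

theorem stmt_9 (n s p : ℕ) (hs : 2 ≤ s) (hp : 2 ≤ p) (hn : 7 * s + 6 ≤ n) :
    (s * (2 * s + 1) : ℤ) * ((n : ℤ) - 2) ^ p +
        (3 * (n.choose 3 : ℤ) - 3 * ((n - s).choose 3 : ℤ) -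
          (s * (2 * s + 1) : ℤ) * ((n : ℤ) - 2)) * (3 * (s : ℤ)) ^ (p - 1) <
      ((n.choose 2 : ℤ) - ((n - s).choose 2 : ℤ)) * ((n : ℤ) - 2) ^ p := by
  have hsn : s ≤ n := by omega
  have hcast : ((n - s : ℕ) : ℤ) = (n : ℤ) - (s : ℤ) := by
    push_cast [hsn]; ring
  have hy : (2 : ℤ) ≤ (s : ℤ) := by exact_mod_cast hs
  have hx : 7 * (s : ℤ) + 6 ≤ (n : ℤ) := by exact_mod_cast hn
  set x : ℤ := (n : ℤ) with hxdef
  set y : ℤ := (s : ℤ) with hydef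
  have h2n : (n.choose 2 : ℤ) * 2 = x * (x - 1) := ch2 n
  have h2m : ((n - s).choose 2 : ℤ) * 2 = (x - y) * (x - y - 1) := by
    rw [ch2, hcast]
  have h3n : (n.choose 3 : ℤ) * 6 = x * (x - 1) * (x - 2) := ch3 n
  have h3m : ((n - s).choose 3 : ℤ) * 6 = (x - y) * (x - y - 1) * (x - y - 2) := by
    rw [ch3, hcast]
  clear_value x y
  have hx2 : (0 : ℤ) < x - 2 := by nlinarith
  have hy0 : (0 : ℤ) < y := by nlinarith
  -- nonnegativity of B
  have hB : (0 : ℤ) ≤ 3 * (n.choose 3 : ℤ) - 3 * ((n - s).choose 3 : ℤ) -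
      y * (2 * y + 1) * (x - 2) := by
    have hE : 2 * (3 * (n.choose 3 : ℤ) - 3 * ((n - s).choose 3 : ℤ) -
        y * (2 * y + 1) * (x - 2)) = y * (3*x^2 - (7*y + 8)*x + y^2 + 11*y + 6) := by
      linear_combination h3n - h3m
    nlinarith [mul_nonneg (le_of_lt hy0) (aux_B x y hy hx)]
  induction p, hp using Nat.le_induction with
  | base =>
    have hE : 2 * (((n.choose 2 : ℤ) - ((n - s).choose 2 : ℤ)) * (x - 2) ^ 2 -
        ((y * (2 * y + 1)) * (x - 2) ^ 2 +
          (3 * (n.choose 3 : ℤ) - 3 * ((n - s).choose 3 : ℤ) - y * (2 * y + 1) * (x - 2)) *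
            (3 * y) ^ 1)) =
        y * (2*x^3 - 11*x^2 - 14*x^2*y + 20*x + 44*x*y + 21*x*y^2
          - 3*y^3 - 33*y^2 - 38*y - 12) := by
      linear_combination (x-2)^2 * h2n - (x-2)^2 * h2m - 3*y*h3n + 3*y*h3m
    have hQ := mul_pos hy0 (aux_base x y hy hx)
    have hlt : (y * (2 * y + 1)) * (x - 2) ^ 2 +
        (3 * (n.choose 3 : ℤ) - 3 * ((n - s).choose 3 : ℤ) - y * (2 * y + 1) * (x - 2)) *
          (3 * y) ^ 1 <
        ((n.choose 2 : ℤ) - ((n - s).choose 2 : ℤ)) * (x - 2) ^ 2 := by linarith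
    simpa using hlt
  | succ p hp ih =>
    have hpow : (0 : ℤ) ≤ (3 * y) ^ (p - 1) := by positivity
    have hps : (3 * y) ^ (p + 1 - 1) = (3 * y) ^ (p - 1) * (3 * y) := by
      rw [show p + 1 - 1 = (p - 1) + 1 by omega, pow_succ]
    rw [hps, pow_succ]
    have h3y : 3 * y ≤ x - 2 := by linarith
    generalize hz : (x - 2) ^ p = z at ih
    generalize hw : (3 * y) ^ (p - 1) = w at ih hpow
    have hz0 : 0 < z := by rw [← hz]; positivity
    have key : (y * (2 * y + 1) : ℤ) * (z * (x - 2)) +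
        (3 * (n.choose 3 : ℤ) - 3 * ((n - s).choose 3 : ℤ) - y * (2 * y + 1) * (x - 2)) *
          (w * (3 * y)) ≤
        ((y * (2 * y + 1) : ℤ) * z +
          (3 * (n.choose 3 : ℤ) - 3 * ((n - s).choose 3 : ℤ) - y * (2 * y + 1) * (x - 2)) * w) *
          (x - 2) := by
      have h := mul_nonneg (mul_nonneg hB hpow) (by linarith : (0:ℤ) ≤ x - 2 - 3 * y)
      nlinarith [h]
    have h2 := mul_lt_mul_of_pos_right ih hx2
    calc (y * (2 * y + 1) : ℤ) * (z * (x - 2)) +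
        (3 * (n.choose 3 : ℤ) - 3 * ((n - s).choose 3 : ℤ) - y * (2 * y + 1) * (x - 2)) *
          (w * (3 * y)) ≤ _ := key
      _ < (((n.choose 2 : ℤ) - ((n - s).choose 2 : ℤ)) * z) * (x - 2) := h2
      _ = ((n.choose 2 : ℤ) - ((n - s).choose 2 : ℤ)) * (z * (x - 2)) := by ring
end

section
/- Let H be a family of 3-element subsets of [n] that is intersecting (ν(H) = 1), let p ≥ 1, and suppose n ≥ 13. Then co_p(H) = ∑_{E ∈ C([n],2)} d_H(E)^p ≤ co_p(H_{n,3,1}), where H_{n,3,1} = {F ∈ C([n],3) : 1 ∈ F}, with equality if and only if H is isomorphic to H_{n,3,1}. -/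
open Finset

lemma third_aux {n : ℕ} {F E : Finset (Fin n)} (hF : F.card = 3) (hE : E.card = 2)
    (hEF : E ⊆ F) : ∃ z, F \ E = {z} :=
  Finset.card_eq_one.mp (by rw [card_sdiff_of_subset hEF, hF, hE])

lemma card_le_of_third {n : ℕ} (H' : Finset (Finset (Fin n))) (E K : Finset (Fin n))
    (hE : E.card = 2) (h3 : ∀ F ∈ H', F.card = 3)
    (hsub : ∀ F ∈ H', E ⊆ F ∧ F \ E ⊆ K) : H'.card ≤ K.card := by
  have h := Finset.card_le_card_of_injOn (f := fun F => F \ E) (s := H') (t := K.powersetCard 1)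
    (fun F hF => by
      simp only [Finset.mem_coe, mem_powersetCard]
      exact ⟨(hsub F hF).2, by rw [card_sdiff_of_subset (hsub F hF).1, h3 F hF, hE]⟩)
    (fun F hF G hG hFG => by
      simp only [Finset.mem_coe] at hF hG
      simp only at hFG
      have h1 : F \ E ∪ E = G \ E ∪ E := by rw [hFG]
      rwa [sdiff_union_of_subset (hsub F hF).1, sdiff_union_of_subset (hsub G hG).1] at h1)
  rwa [card_powersetCard, Nat.choose_one_right] at h

lemma count_ext {n : ℕ} (k j : ℕ) (E : Finset (Fin n)) (hE : E.card = k) :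
    ((Finset.univ.powersetCard (k+j)).filter (fun F => E ⊆ F)).card = (n-k).choose j := by
  have : ((Finset.univ.powersetCard (k+j)).filter (fun F => E ⊆ F)).card
      = (Eᶜ.powersetCard j).card := by
    apply Finset.card_bij' (fun F _ => F \ E) (fun G _ => G ∪ E)
    · intro F hF
      rw [mem_filter, mem_powersetCard] at hF
      rw [mem_powersetCard]
      refine ⟨fun t ht => ?_, by rw [card_sdiff_of_subset hF.2, hF.1.2, hE, Nat.add_sub_cancel_left]⟩
      · rw [mem_sdiff] at ht; simpa using ht.2
    · intro G hG
      rw [mem_powersetCard] at hG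
      have hd : Disjoint G E := by
        rw [Finset.disjoint_left]; intro a haG haE
        have := hG.1 haG; simp at this; exact this haE
      rw [mem_filter, mem_powersetCard]
      exact ⟨⟨subset_univ _, by rw [card_union_of_disjoint hd, hG.2, hE, Nat.add_comm]⟩,
        subset_union_right⟩
    · intro F hF
      rw [mem_filter] at hF
      exact sdiff_union_of_subset hF.2
    · intro G hG
      rw [mem_powersetCard] at hG
      have hd : Disjoint G E := by
        rw [Finset.disjoint_left]; intro a haG haE
        have := hG.1 haG; simp at this; exact this haE
      rw [union_sdiff_distrib, sdiff_eq_self_of_disjoint hd, sdiff_self]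
      simp
  rw [this, card_powersetCard, card_compl, hE, Fintype.card_fin]

lemma deg_le {n : ℕ} (H : Finset (Finset (Fin n))) (hH : ∀ F ∈ H, F.card = 3)
    {E : Finset (Fin n)} (hE : E.card = 2)
    :
    (H.filter (fun F => E ⊆ F)).card ≤ n - 2 := by
  have := card_le_of_third (H.filter (fun F => E ⊆ F)) E Eᶜ hE
    (fun F hF => hH F (mem_filter.mp hF).1)
    (fun F hF => ⟨(mem_filter.mp hF).2, fun t ht => by
      rw [mem_sdiff] at ht; simpa using ht.2⟩)
  rwa [card_compl, hE, Fintype.card_fin] at this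

open Finset

def starF (n : ℕ) (x : Fin n) : Finset (Finset (Fin n)) :=
  (Finset.univ.powersetCard 3).filter (fun F => x ∈ F)

lemma coP_image (n p : ℕ) (σ : Equiv.Perm (Fin n)) (H : Finset (Finset (Fin n))) :
    coP n p (H.image (Finset.image σ)) = coP n p H := by
  unfold coP
  have hinj : Function.Injective (Finset.image σ : Finset (Fin n) → Finset (Fin n)) :=
    Finset.image_injective σ.injective
  apply Finset.sum_nbij' (fun E => E.image σ.symm) (fun E => E.image σ)
  · intro E hE
    rw [mem_powersetCard] at hE ⊢
    exact ⟨subset_univ _, by rw [Finset.card_image_of_injective _ σ.symm.injective, hE.2]⟩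
  · intro E hE
    rw [mem_powersetCard] at hE ⊢
    exact ⟨subset_univ _, by rw [Finset.card_image_of_injective _ σ.injective, hE.2]⟩
  · intro E _; simp [Finset.image_image, Function.comp]
  · intro E _; simp [Finset.image_image, Function.comp]
  · intro E _
    congr 1
    rw [Finset.filter_image, Finset.card_image_of_injective _ hinj]
    congr 1
    apply Finset.filter_congr
    intro F _
    constructor
    · intro h t ht
      rw [Finset.mem_image] at ht
      obtain ⟨a, ha, rfl⟩ := ht
      have h2 := h ha
      rw [Finset.mem_image] at h2
      obtain ⟨b, hb, rfl⟩ := h2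
      simpa using hb
    · intro h t ht
      have h2 := h (Finset.mem_image_of_mem σ.symm ht)
      rw [Finset.mem_image]
      exact ⟨σ.symm t, h2, σ.apply_symm_apply t⟩

lemma starF_image (n : ℕ) (x : Fin n) (σ : Equiv.Perm (Fin n)) :
    (starF n x).image (Finset.image σ) = starF n (σ x) := by
  ext G
  simp only [starF, Finset.mem_image, mem_filter, mem_powersetCard]
  constructor
  · rintro ⟨F, ⟨⟨-, hc⟩, hx⟩, rfl⟩
    exact ⟨⟨subset_univ _, by rw [Finset.card_image_of_injective _ σ.injective, hc]⟩,
      Finset.mem_image_of_mem _ hx⟩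
  · rintro ⟨⟨-, hc⟩, hx⟩
    refine ⟨G.image σ.symm, ⟨⟨subset_univ _,
      by rw [Finset.card_image_of_injective _ σ.symm.injective, hc]⟩, ?_⟩, ?_⟩
    · have := Finset.mem_image_of_mem σ.symm hx
      simpa using this
    · rw [Finset.image_image]
      simp [Function.comp]

lemma Hfam_eq_star (n : ℕ) (hn : 13 ≤ n) :
    (Finset.univ.powersetCard 3).filter (fun F : Finset (Fin n) => ∃ x ∈ F, (x : ℕ) < 1)
      = starF n ⟨0, by omega⟩ := by
  unfold starF
  apply Finset.filter_congr
  intro F _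
  constructor
  · rintro ⟨x, hx, hlt⟩
    have : x = ⟨0, by omega⟩ := by
      apply Fin.ext; simpa using hlt
    rwa [← this]
  · intro h
    exact ⟨_, h, by simp⟩

lemma coP_starF (n p : ℕ) (hn : 13 ≤ n) (x : Fin n) :
    coP n p (starF n x) = (n-1)*(n-2)^p + (n-1).choose 2 := by
  unfold coP starF
  rw [← Finset.sum_filter_add_sum_filter_not (Finset.univ.powersetCard 2)
    (fun E => x ∈ E)]
  have h1 : ∀ E ∈ (Finset.univ.powersetCard 2).filter (fun E => x ∈ E),
      ((((Finset.univ.powersetCard 3).filter (fun F => x ∈ F)).filter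
        (fun F => E ⊆ F)).card) ^ p = (n-2)^p := by
    intro E hE
    rw [mem_filter, mem_powersetCard] at hE
    congr 1
    rw [Finset.filter_filter]
    have : ((Finset.univ.powersetCard 3).filter (fun F => x ∈ F ∧ E ⊆ F))
        = ((Finset.univ.powersetCard 3).filter (fun F => E ⊆ F)) := by
      apply Finset.filter_congr
      intro F _
      constructor
      · exact fun h => h.2
      · exact fun h => ⟨h hE.2, h⟩
    rw [this]
    have h3 : (2 : ℕ) + 1 = 3 := rfl
    have := count_ext (n := n) 2 1 E hE.1.2
    rw [h3] at this
    rw [this, Nat.choose_one_right]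
  have h2 : ∀ E ∈ (Finset.univ.powersetCard 2).filter (fun E => ¬ x ∈ E),
      ((((Finset.univ.powersetCard 3).filter (fun F => x ∈ F)).filter
        (fun F => E ⊆ F)).card) ^ p = 1 := by
    intro E hE
    rw [mem_filter, mem_powersetCard] at hE
    rw [Finset.filter_filter]
    have : ((Finset.univ.powersetCard 3).filter (fun F => x ∈ F ∧ E ⊆ F))
        = ((Finset.univ.powersetCard 3).filter (fun F => insert x E ⊆ F)) := by
      apply Finset.filter_congr
      intro F _
      simp only [Finset.insert_subset_iff]
    rw [this]
    have hcard : (insert x E).card = 3 := by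
      rw [Finset.card_insert_of_notMem hE.2, hE.1.2]
    have h3 : (3 : ℕ) + 0 = 3 := rfl
    have := count_ext (n := n) 3 0 (insert x E) hcard
    rw [h3] at this
    rw [this, Nat.choose_zero_right, one_pow]
  rw [Finset.sum_congr rfl h1, Finset.sum_congr rfl h2]
  rw [Finset.sum_const, Finset.sum_const, smul_eq_mul, smul_eq_mul, mul_one]
  have hc1 : ((Finset.univ.powersetCard 2).filter (fun E : Finset (Fin n) => x ∈ E)).card
      = n - 1 := by
    have : ((Finset.univ.powersetCard 2).filter (fun E : Finset (Fin n) => x ∈ E))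
        = ((Finset.univ.powersetCard 2).filter (fun E : Finset (Fin n) => {x} ⊆ E)) := by
      apply Finset.filter_congr; intro E _; simp
    rw [this]
    have h3 : (1 : ℕ) + 1 = 2 := rfl
    have := count_ext (n := n) 1 1 ({x} : Finset (Fin n)) (Finset.card_singleton x)
    rw [h3] at this
    rw [this, Nat.choose_one_right]
  have hc2 : ((Finset.univ.powersetCard 2).filter (fun E : Finset (Fin n) => ¬ x ∈ E)).card
      = (n-1).choose 2 := by
    have htot := Finset.card_filter_add_card_filter_not
      (s := Finset.univ.powersetCard 2) (p := fun E : Finset (Fin n) => x ∈ E)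
    rw [hc1] at htot
    rw [Finset.card_powersetCard, Finset.card_univ, Fintype.card_fin] at htot
    have hpascal : n.choose 2 = (n-1).choose 1 + (n-1).choose 2 := by
      have h4 : n - 1 + 1 = n := by omega
      calc n.choose 2 = ((n-1)+1).choose (1+1) := by rw [h4]
        _ = (n-1).choose 1 + (n-1).choose 2 := Nat.choose_succ_succ _ 1
    rw [Nat.choose_one_right] at hpascal
    omega
  rw [hc1, hc2]

lemma coP_mono (n p : ℕ) {H H' : Finset (Finset (Fin n))} (h : H ⊆ H') :
    coP n p H ≤ coP n p H' := by
  apply Finset.sum_le_sum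
  intro E _
  exact Nat.pow_le_pow_left (Finset.card_le_card (Finset.filter_subset_filter _ h)) p

lemma coP_strict (n p : ℕ) (hp : 1 ≤ p) {H H' : Finset (Finset (Fin n))}
    (h : H ⊆ H') (h3 : ∀ F ∈ H', F.card = 3) (hne : H ≠ H') :
    coP n p H < coP n p H' := by
  obtain ⟨F, hF', hFn⟩ : ∃ F ∈ H', F ∉ H := by
    by_contra hc
    push_neg at hc
    exact hne (Finset.Subset.antisymm h hc)
  obtain ⟨E, hEF, hE2⟩ := Finset.exists_subset_card_eq (show 2 ≤ F.card by rw [h3 F hF']; omega)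
  apply Finset.sum_lt_sum
  · intro E _
    exact Nat.pow_le_pow_left (Finset.card_le_card (Finset.filter_subset_filter _ h)) p
  · refine ⟨E, ?_, ?_⟩
    · rw [mem_powersetCard]; exact ⟨subset_univ _, hE2⟩
    · apply Nat.pow_lt_pow_left _ (by omega)
      apply Finset.card_lt_card
      rw [Finset.ssubset_iff_of_subset (Finset.filter_subset_filter _ h)]
      exact ⟨F, by rw [mem_filter]; exact ⟨hF', hEF⟩, by rw [mem_filter]; tauto⟩
lemma sum_deg (n : ℕ) (H : Finset (Finset (Fin n))) (hH : ∀ F ∈ H, F.card = 3) :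
    ∑ E ∈ Finset.univ.powersetCard 2, (H.filter (fun F => E ⊆ F)).card = 3 * H.card := by
  have : ∀ E ∈ Finset.univ.powersetCard 2, (H.filter (fun F => E ⊆ F)).card
      = ∑ F ∈ H, if E ⊆ F then 1 else 0 := by
    intro E _
    rw [Finset.card_filter]
  rw [Finset.sum_congr rfl this, Finset.sum_comm]
  have : ∀ F ∈ H, (∑ E ∈ Finset.univ.powersetCard 2, if E ⊆ F then 1 else 0) = 3 := by
    intro F hF
    rw [← Finset.card_filter]
    have he : (Finset.univ.powersetCard 2).filter (fun E : Finset (Fin n) => E ⊆ F)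
        = F.powersetCard 2 := by
      ext E
      rw [Finset.mem_filter, Finset.mem_powersetCard, Finset.mem_powersetCard]
      constructor
      · rintro ⟨⟨-, h2⟩, h3⟩; exact ⟨h3, h2⟩
      · rintro ⟨h3, h2⟩; exact ⟨⟨Finset.subset_univ _, h2⟩, h3⟩
    rw [he, Finset.card_powersetCard, hH F hF]
    decide
  rw [Finset.sum_congr rfl this, Finset.sum_const, smul_eq_mul, mul_comm]

lemma arith_p2 (m : ℕ) (hm : 11 ≤ m) : ∀ p, 2 ≤ p → 3^p*(5*m-4) < (m-2)*m^p := by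
  intro p hp
  induction p with
  | zero => omega
  | succ q ih =>
    rcases Nat.lt_or_ge q 2 with hq | hq
    · have hq1 : q = 1 := by omega
      subst hq1
      have h1 : (3:ℕ)^2*(5*m-4) = 45*m - 36 := by ring_nf; omega
      have h2 : (m-2)*m^2 ≥ 9*(m*m) := by
        have : m - 2 ≥ 9 := by omega
        calc (m-2)*m^2 ≥ 9*m^2 := Nat.mul_le_mul_right _ this
          _ = 9*(m*m) := by ring
      have h3 : 9*(m*m) ≥ 9*(11*m) := by
        apply Nat.mul_le_mul_left
        exact Nat.mul_le_mul_right _ hm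
      have : 45*m - 36 < 99*m := by omega
      calc (3:ℕ)^2*(5*m-4) = 45*m-36 := h1
        _ < 99*m := this
        _ = 9*(11*m) := by ring
        _ ≤ 9*(m*m) := h3
        _ ≤ (m-2)*m^2 := h2
    · have ih2 := ih (by omega)
      calc 3^(q+1)*(5*m-4) = 3*(3^q*(5*m-4)) := by ring
        _ < 3*((m-2)*m^q) := by
            exact Nat.mul_lt_mul_of_pos_left ih2 (by norm_num)
        _ ≤ m*((m-2)*m^q) := Nat.mul_le_mul_right _ (by omega)
        _ = (m-2)*m^(q+1) := by ring

lemma arith_main (n p : ℕ) (hn : 13 ≤ n) (hp : 1 ≤ p) :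
    3*(n-2)^p + 3^p*(5*n-14) < (n-1)*(n-2)^p + (n-1).choose 2 := by
  have hch : 2 * (n-1).choose 2 = (n-1)*(n-2) := by
    have hev := Nat.even_mul_succ_self (n-2)
    have h3 : n - 2 + 1 = n - 1 := by omega
    rw [h3] at hev
    have h4 : Even ((n-1)*(n-2)) := by rwa [mul_comm] at hev
    have h2 : 2 ∣ (n-1)*(n-2) := h4.two_dvd
    rw [Nat.choose_two_right]
    have h5 : n - 1 - 1 = n - 2 := by omega
    rw [h5]
    omega
  set m := n - 2 with hmdef
  have hm : 11 ≤ m := by omega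
  rcases Nat.lt_or_ge p 2 with hp1 | hp2
  · have : p = 1 := by omega
    subst this
    simp only [pow_one]
    have h5 : 5*n-14 = 5*m-4 := by omega
    have ha : 12*m ≤ (n-1)*m := Nat.mul_le_mul_right _ (by omega)
    omega
  · have key := arith_p2 m hm p hp2
    have hsum : 3*m^p + (m-2)*m^p = (n-1)*m^p := by
      have : 3 + (m-2) = n-1 := by omega
      calc 3*m^p + (m-2)*m^p = (3+(m-2))*m^p := by ring
        _ = (n-1)*m^p := by rw [this]
    calc 3*m^p + 3^p*(5*n-14) = 3*m^p + 3^p*(5*m-4) := by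
          congr 2; omega
      _ < 3*m^p + (m-2)*m^p := by omega
      _ = (n-1)*m^p := hsum
      _ ≤ (n-1)*m^p + (n-1).choose 2 := Nat.le_add_right _ _
lemma card_bound (n : ℕ) (hn : 13 ≤ n) (H : Finset (Finset (Fin n)))
    (hH : ∀ F ∈ H, F.card = 3) (hne : H.Nonempty)
    (hint : ∀ A ∈ H, ∀ B ∈ H, ¬ Disjoint A B)
    (hns : ∀ x, ∃ F ∈ H, x ∉ F) : H.card ≤ 5*n-14 := by
  have hmeet : ∀ A ∈ H, ∀ B ∈ H, ∃ t, t ∈ A ∧ t ∈ B := by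
    intro A hA B hB
    exact Finset.not_disjoint_iff.mp (hint A hA B hB)
  by_cases hcov : ∃ x y : Fin n, x ≠ y ∧ ∀ F ∈ H, x ∈ F ∨ y ∈ F
  · obtain ⟨x, y, hxy, hc⟩ := hcov
    obtain ⟨F1, hF1, hxF1⟩ := hns x
    have hyF1 : y ∈ F1 := (hc F1 hF1).resolve_left hxF1
    obtain ⟨F2, hF2, hyF2⟩ := hns y
    have hxF2 : x ∈ F2 := (hc F2 hF2).resolve_right hyF2
    -- bound on the families through a fixed pair avoiding a third point
    have keybound : ∀ (a b c : Fin n), a ≠ b → a ≠ c → b ≠ c →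
        (H.filter (fun F => a ∉ F ∧ b ∈ F ∧ c ∈ F)).card ≤ n - 3 := by
      intro a b c hab hac hbc
      have h := card_le_of_third (H.filter (fun F => a ∉ F ∧ b ∈ F ∧ c ∈ F))
        ({b, c}) ({a, b, c} : Finset (Fin n))ᶜ
        (by rw [Finset.card_insert_of_notMem (by simp [hbc]), Finset.card_singleton])
        (fun F hF => hH F (Finset.mem_filter.mp hF).1)
        (fun F hF => by
          obtain ⟨hFH, haF, hbF, hcF⟩ := Finset.mem_filter.mp hF
          refine ⟨Finset.insert_subset hbF (Finset.singleton_subset_iff.mpr hcF), ?_⟩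
          intro t ht
          rw [Finset.mem_sdiff] at ht
          rw [Finset.mem_compl]
          simp only [Finset.mem_insert, Finset.mem_singleton] at ht ⊢
          push_neg
          refine ⟨?_, fun h => ht.2 (Or.inl h), fun h => ht.2 (Or.inr h)⟩
          rintro rfl; exact haF ht.1)
      rwa [Finset.card_compl, Fintype.card_fin,
        Finset.card_insert_of_notMem (by simp [hab, hac]),
        Finset.card_insert_of_notMem (by simp [hbc]), Finset.card_singleton] at h
    -- the three parts
    have hsplit1 := Finset.card_filter_add_card_filter_not
      (s := H) (p := fun F => x ∈ F)
    have hsplit2 := Finset.card_filter_add_card_filter_not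
      (s := H.filter (fun F => x ∈ F)) (p := fun F => y ∈ F)
    rw [Finset.filter_filter, Finset.filter_filter] at hsplit2
    -- part A : x and y
    have hA : (H.filter (fun F => x ∈ F ∧ y ∈ F)).card ≤ n - 2 := by
      have h := card_le_of_third (H.filter (fun F => x ∈ F ∧ y ∈ F))
        ({x, y}) ({x, y} : Finset (Fin n))ᶜ
        (by rw [Finset.card_insert_of_notMem (by simp [hxy]), Finset.card_singleton])
        (fun F hF => hH F (Finset.mem_filter.mp hF).1)
        (fun F hF => by
          obtain ⟨hFH, hxF, hyF⟩ := Finset.mem_filter.mp hF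
          refine ⟨Finset.insert_subset hxF (Finset.singleton_subset_iff.mpr hyF), ?_⟩
          intro t ht
          rw [Finset.mem_sdiff] at ht
          rw [Finset.mem_compl]
          exact ht.2)
      rwa [Finset.card_compl, Fintype.card_fin,
        Finset.card_insert_of_notMem (by simp [hxy]), Finset.card_singleton] at h
    -- part B : x not y
    have hB : (H.filter (fun F => x ∈ F ∧ y ∉ F)).card ≤ 2*(n-3) := by
      have hsub : H.filter (fun F => x ∈ F ∧ y ∉ F) ⊆
          (F1.erase y).biUnion (fun w => H.filter (fun F => y ∉ F ∧ x ∈ F ∧ w ∈ F)) := by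
        intro F hF
        obtain ⟨hFH, hxF, hyF⟩ := Finset.mem_filter.mp hF
        obtain ⟨t, htF, htF1⟩ := hmeet F hFH F1 hF1
        rw [Finset.mem_biUnion]
        refine ⟨t, Finset.mem_erase.mpr ⟨fun h => hyF (h ▸ htF), htF1⟩, ?_⟩
        rw [Finset.mem_filter]
        exact ⟨hFH, hyF, hxF, htF⟩
      calc (H.filter (fun F => x ∈ F ∧ y ∉ F)).card
          ≤ ((F1.erase y).biUnion (fun w => H.filter (fun F => y ∉ F ∧ x ∈ F ∧ w ∈ F))).card :=
            Finset.card_le_card hsub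
        _ ≤ ∑ w ∈ F1.erase y, (H.filter (fun F => y ∉ F ∧ x ∈ F ∧ w ∈ F)).card :=
            Finset.card_biUnion_le
        _ ≤ ∑ w ∈ F1.erase y, (n-3) := by
            apply Finset.sum_le_sum
            intro w hw
            have hwy : w ≠ y := (Finset.mem_erase.mp hw).1
            have hwF1 : w ∈ F1 := (Finset.mem_erase.mp hw).2
            have hwx : w ≠ x := fun h => hxF1 (h ▸ hwF1)
            exact keybound y x w (Ne.symm hxy) (Ne.symm hwy) (Ne.symm hwx)
        _ = 2*(n-3) := by
            rw [Finset.sum_const, smul_eq_mul, Finset.card_erase_of_mem hyF1, hH F1 hF1]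
    -- part C : not x (hence y)
    have hC : (H.filter (fun F => x ∉ F)).card ≤ 2*(n-3) := by
      have hsub : H.filter (fun F => x ∉ F) ⊆
          (F2.erase x).biUnion (fun w => H.filter (fun F => x ∉ F ∧ y ∈ F ∧ w ∈ F)) := by
        intro F hF
        obtain ⟨hFH, hxF⟩ := Finset.mem_filter.mp hF
        obtain ⟨t, htF, htF2⟩ := hmeet F hFH F2 hF2
        rw [Finset.mem_biUnion]
        refine ⟨t, Finset.mem_erase.mpr ⟨fun h => hxF (h ▸ htF), htF2⟩, ?_⟩
        rw [Finset.mem_filter]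
        exact ⟨hFH, hxF, (hc F hFH).resolve_left hxF, htF⟩
      calc (H.filter (fun F => x ∉ F)).card
          ≤ ((F2.erase x).biUnion (fun w => H.filter (fun F => x ∉ F ∧ y ∈ F ∧ w ∈ F))).card :=
            Finset.card_le_card hsub
        _ ≤ ∑ w ∈ F2.erase x, (H.filter (fun F => x ∉ F ∧ y ∈ F ∧ w ∈ F)).card :=
            Finset.card_biUnion_le
        _ ≤ ∑ w ∈ F2.erase x, (n-3) := by
            apply Finset.sum_le_sum
            intro w hw
            have hwx : w ≠ x := (Finset.mem_erase.mp hw).1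
            have hwF2 : w ∈ F2 := (Finset.mem_erase.mp hw).2
            have hwy : w ≠ y := fun h => hyF2 (h ▸ hwF2)
            exact keybound x y w hxy (Ne.symm hwx) (Ne.symm hwy)
        _ = 2*(n-3) := by
            rw [Finset.sum_const, smul_eq_mul, Finset.card_erase_of_mem hxF2, hH F2 hF2]
    omega
  · -- no covering pair : |H| ≤ 27
    push_neg at hcov
    have hno : ∀ v w : Fin n, ∃ F ∈ H, v ∉ F ∧ w ∉ F := by
      intro v w
      by_cases hvw : v = w
      · obtain ⟨F, hF, hv⟩ := hns v
        exact ⟨F, hF, hv, hvw ▸ hv⟩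
      · obtain ⟨F, hF, h⟩ := hcov v w hvw
        exact ⟨F, hF, h⟩
    have pairdeg : ∀ v w : Fin n, v ≠ w →
        (H.filter (fun F => v ∈ F ∧ w ∈ F)).card ≤ 3 := by
      intro v w hvw
      obtain ⟨F2, hF2, hvF2, hwF2⟩ := hno v w
      have h := card_le_of_third (H.filter (fun F => v ∈ F ∧ w ∈ F)) ({v, w}) F2
        (by rw [Finset.card_insert_of_notMem (by simp [hvw]), Finset.card_singleton])
        (fun F hF => hH F (Finset.mem_filter.mp hF).1)
        (fun F hF => by
          obtain ⟨hFH, hvF, hwF⟩ := Finset.mem_filter.mp hF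
          have hEF : ({v, w} : Finset (Fin n)) ⊆ F :=
            Finset.insert_subset hvF (Finset.singleton_subset_iff.mpr hwF)
          refine ⟨hEF, ?_⟩
          obtain ⟨z, hz⟩ := third_aux (hH F hFH)
            (by rw [Finset.card_insert_of_notMem (by simp [hvw]), Finset.card_singleton]) hEF
          obtain ⟨u, huF, huF2⟩ := hmeet F hFH F2 hF2
          have hu : u ∈ F \ {v, w} := by
            rw [Finset.mem_sdiff]
            refine ⟨huF, ?_⟩
            simp only [Finset.mem_insert, Finset.mem_singleton]
            push_neg
            exact ⟨fun h => hvF2 (h ▸ huF2), fun h => hwF2 (h ▸ huF2)⟩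
          rw [hz] at hu
          intro t ht
          rw [hz] at ht
          rw [Finset.mem_singleton] at hu ht
          rw [ht, ← hu]
          exact huF2)
      rwa [hH F2 hF2] at h
    have vertdeg : ∀ v : Fin n, (H.filter (fun F => v ∈ F)).card ≤ 9 := by
      intro v
      obtain ⟨F1, hF1, hvF1⟩ := hns v
      have hsub : H.filter (fun F => v ∈ F) ⊆
          F1.biUnion (fun w => H.filter (fun F => v ∈ F ∧ w ∈ F)) := by
        intro F hF
        obtain ⟨hFH, hvF⟩ := Finset.mem_filter.mp hF
        obtain ⟨t, htF, htF1⟩ := hmeet F hFH F1 hF1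
        rw [Finset.mem_biUnion]
        exact ⟨t, htF1, by rw [Finset.mem_filter]; exact ⟨hFH, hvF, htF⟩⟩
      calc (H.filter (fun F => v ∈ F)).card
          ≤ (F1.biUnion (fun w => H.filter (fun F => v ∈ F ∧ w ∈ F))).card :=
            Finset.card_le_card hsub
        _ ≤ ∑ w ∈ F1, (H.filter (fun F => v ∈ F ∧ w ∈ F)).card := Finset.card_biUnion_le
        _ ≤ ∑ w ∈ F1, 3 := by
            apply Finset.sum_le_sum
            intro w hw
            exact pairdeg v w (fun h => hvF1 (h ▸ hw))
        _ = 9 := by rw [Finset.sum_const, smul_eq_mul, hH F1 hF1]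
    obtain ⟨F0, hF0⟩ := hne
    have hsub : H ⊆ F0.biUnion (fun v => H.filter (fun F => v ∈ F)) := by
      intro F hF
      obtain ⟨t, htF, htF0⟩ := hmeet F hF F0 hF0
      rw [Finset.mem_biUnion]
      exact ⟨t, htF0, by rw [Finset.mem_filter]; exact ⟨hF, htF⟩⟩
    calc H.card ≤ (F0.biUnion (fun v => H.filter (fun F => v ∈ F))).card :=
          Finset.card_le_card hsub
      _ ≤ ∑ v ∈ F0, (H.filter (fun F => v ∈ F)).card := Finset.card_biUnion_le
      _ ≤ ∑ v ∈ F0, 9 := Finset.sum_le_sum (fun v _ => vertdeg v)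
      _ = 27 := by rw [Finset.sum_const, smul_eq_mul, hH F0 hF0]
      _ ≤ 5*n-14 := by omega
lemma cover_of_deg4 (n : ℕ) (H : Finset (Finset (Fin n)))
    (hH : ∀ F ∈ H, F.card = 3) (hint : ∀ A ∈ H, ∀ B ∈ H, ¬ Disjoint A B)
    {E : Finset (Fin n)} (hE : E.card = 2)
    (h4 : 4 ≤ (H.filter (fun F => E ⊆ F)).card) :
    ∀ F ∈ H, ∃ t ∈ E, t ∈ F := by
  intro F hF
  by_contra hcon
  push_neg at hcon
  have h := card_le_of_third (H.filter (fun F => E ⊆ F)) E F hE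
    (fun G hG => hH G (Finset.mem_filter.mp hG).1)
    (fun G hG => by
      obtain ⟨hGH, hEG⟩ := Finset.mem_filter.mp hG
      refine ⟨hEG, ?_⟩
      obtain ⟨z, hz⟩ := third_aux (hH G hGH) hE hEG
      obtain ⟨u, huG, huF⟩ := Finset.not_disjoint_iff.mp (hint G hGH F hF)
      have hu : u ∈ G \ E := by
        rw [Finset.mem_sdiff]
        exact ⟨huG, fun h => hcon u h huF⟩
      rw [hz] at hu
      intro t ht
      rw [hz, Finset.mem_singleton] at ht
      rw [Finset.mem_singleton] at hu
      rw [ht, ← hu]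
      exact huF)
  rw [hH F hF] at h
  omega

lemma Dcard (n : ℕ) (H : Finset (Finset (Fin n)))
    (hH : ∀ F ∈ H, F.card = 3) (hint : ∀ A ∈ H, ∀ B ∈ H, ¬ Disjoint A B)
    (hns : ∀ x, ∃ F ∈ H, x ∉ F) :
    ((Finset.univ.powersetCard 2).filter
      (fun E => 4 ≤ (H.filter (fun F => E ⊆ F)).card)).card ≤ 3 := by
  set D := (Finset.univ.powersetCard 2).filter
    (fun E => 4 ≤ (H.filter (fun F => E ⊆ F)).card) with hD
  have hDcard : ∀ E ∈ D, E.card = 2 := by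
    intro E hE
    rw [hD, Finset.mem_filter, Finset.mem_powersetCard] at hE
    exact hE.1.2
  have hDcov : ∀ E ∈ D, ∀ F ∈ H, ∃ t ∈ E, t ∈ F := by
    intro E hE
    have h4 : 4 ≤ (H.filter (fun F => E ⊆ F)).card := by
      rw [hD, Finset.mem_filter] at hE
      exact hE.2
    exact cover_of_deg4 n H hH hint (hDcard E hE) h4
  have hpair : ∀ E1 ∈ D, ∀ E2 ∈ D, ∃ t, t ∈ E1 ∧ t ∈ E2 := by
    intro E1 hE1 E2 hE2
    by_contra hcon
    push_neg at hcon
    have h4 : 4 ≤ (H.filter (fun F => E1 ⊆ F)).card := by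
      rw [hD, Finset.mem_filter] at hE1
      exact hE1.2
    have h := card_le_of_third (H.filter (fun F => E1 ⊆ F)) E1 E2 (hDcard E1 hE1)
      (fun G hG => hH G (Finset.mem_filter.mp hG).1)
      (fun G hG => by
        obtain ⟨hGH, hEG⟩ := Finset.mem_filter.mp hG
        refine ⟨hEG, ?_⟩
        obtain ⟨z, hz⟩ := third_aux (hH G hGH) (hDcard E1 hE1) hEG
        obtain ⟨u, huE2, huG⟩ := hDcov E2 hE2 G hGH
        have hu : u ∈ G \ E1 := by
          rw [Finset.mem_sdiff]
          exact ⟨huG, fun h => hcon u h huE2⟩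
        rw [hz] at hu
        intro t ht
        rw [hz, Finset.mem_singleton] at ht
        rw [Finset.mem_singleton] at hu
        rw [ht, ← hu]
        exact huE2)
    rw [hDcard E2 hE2] at h
    omega
  by_contra hDbig
  push_neg at hDbig
  by_cases hcom : ∃ x, ∀ E ∈ D, x ∈ E
  · -- common vertex : D would inject into a triple avoiding x
    obtain ⟨x, hx⟩ := hcom
    obtain ⟨F, hF, hxF⟩ := hns x
    have h := Finset.card_le_card_of_injOn (f := fun E => E.erase x) (s := D)
      (t := F.powersetCard 1)
      (fun E hE => by
        simp only [Finset.mem_coe, Finset.mem_powersetCard]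
        constructor
        · intro t ht
          obtain ⟨htx, htE⟩ := Finset.mem_erase.mp ht
          obtain ⟨u, huE, huF⟩ := hDcov E hE F hF
          have hux : u ≠ x := fun h => hxF (h ▸ huF)
          have hcard1 : (E.erase x).card = 1 := by
            rw [Finset.card_erase_of_mem (hx E hE), hDcard E hE]
          rw [Finset.card_eq_one] at hcard1
          obtain ⟨z, hz⟩ := hcard1
          have hu : u ∈ E.erase x := Finset.mem_erase.mpr ⟨hux, huE⟩
          have ht' : t ∈ E.erase x := Finset.mem_erase.mpr ⟨htx, htE⟩
          rw [hz, Finset.mem_singleton] at hu ht'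
          rw [ht', ← hu]
          exact huF
        · rw [Finset.card_erase_of_mem (hx E hE), hDcard E hE])
      (fun E hE E' hE' hee => by
        simp only [Finset.mem_coe] at hE hE'
        simp only at hee
        have h1 : insert x (E.erase x) = insert x (E'.erase x) := by rw [hee]
        rwa [Finset.insert_erase (hx E hE), Finset.insert_erase (hx E' hE')] at h1)
    rw [Finset.card_powersetCard, hH F hF, Nat.choose_one_right] at h
    omega
  · -- no common vertex : D is a triangle
    push_neg at hcom
    have hDne : D.Nonempty := Finset.card_pos.mp (by omega)
    obtain ⟨E1, hE1⟩ := hDne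
    obtain ⟨a, b, hab, hE1ab⟩ := Finset.card_eq_two.mp (hDcard E1 hE1)
    obtain ⟨E2, hE2, haE2⟩ := hcom a
    have hbE2 : b ∈ E2 := by
      obtain ⟨t, htE1, htE2⟩ := hpair E1 hE1 E2 hE2
      rw [hE1ab, Finset.mem_insert, Finset.mem_singleton] at htE1
      rcases htE1 with rfl | rfl
      · exact absurd htE2 haE2
      · exact htE2
    obtain ⟨u, v, huv, hE2uv⟩ := Finset.card_eq_two.mp (hDcard E2 hE2)
    -- c : the element of E2 other than b
    obtain ⟨c, hcE2, hcb, hE2bc⟩ : ∃ c, c ∈ E2 ∧ c ≠ b ∧ E2 = {b, c} := by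
      rw [hE2uv, Finset.mem_insert, Finset.mem_singleton] at hbE2
      rcases hbE2 with rfl | rfl
      · exact ⟨v, by rw [hE2uv]; simp, Ne.symm huv, hE2uv⟩
      · exact ⟨u, by rw [hE2uv]; simp, huv, by rw [hE2uv]; exact Finset.pair_comm u b⟩
    have hca : c ≠ a := by
      rintro rfl
      exact haE2 hcE2
    obtain ⟨E3, hE3, hbE3⟩ := hcom b
    have haE3 : a ∈ E3 := by
      obtain ⟨t, htE1, htE3⟩ := hpair E1 hE1 E3 hE3
      rw [hE1ab, Finset.mem_insert, Finset.mem_singleton] at htE1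
      rcases htE1 with rfl | rfl
      · exact htE3
      · exact absurd htE3 hbE3
    have hcE3 : c ∈ E3 := by
      obtain ⟨t, htE2, htE3⟩ := hpair E2 hE2 E3 hE3
      rw [hE2bc, Finset.mem_insert, Finset.mem_singleton] at htE2
      rcases htE2 with rfl | rfl
      · exact absurd htE3 hbE3
      · exact htE3
    have hE3ac : E3 = {a, c} := by
      have hsub : ({a, c} : Finset (Fin n)) ⊆ E3 :=
        Finset.insert_subset haE3 (Finset.singleton_subset_iff.mpr hcE3)
      have hc2 : ({a, c} : Finset (Fin n)).card = 2 := by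
        rw [Finset.card_insert_of_notMem (by simp [Ne.symm hca]), Finset.card_singleton]
      exact (Finset.eq_of_subset_of_card_le hsub (by rw [hDcard E3 hE3, hc2])).symm
    -- every member of D is one of the three
    have hsub : D ⊆ {({a,b} : Finset (Fin n)), {b,c}, {a,c}} := by
      intro E hE
      have hE2card : E.card = 2 := hDcard E hE
      simp only [Finset.mem_insert, Finset.mem_singleton]
      obtain ⟨t1, ht1E, ht1E1⟩ := hpair E hE E1 hE1
      obtain ⟨t2, ht2E, ht2E2⟩ := hpair E hE E2 hE2
      obtain ⟨t3, ht3E, ht3E3⟩ := hpair E hE E3 hE3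
      rw [hE1ab, Finset.mem_insert, Finset.mem_singleton] at ht1E1
      rw [hE2bc, Finset.mem_insert, Finset.mem_singleton] at ht2E2
      rw [hE3ac, Finset.mem_insert, Finset.mem_singleton] at ht3E3
      have pairEq : ∀ s t : Fin n, s ≠ t → s ∈ E → t ∈ E → E = {s, t} := by
        intro s t hst hs ht
        have hsub2 : ({s, t} : Finset (Fin n)) ⊆ E :=
          Finset.insert_subset hs (Finset.singleton_subset_iff.mpr ht)
        have hc2 : ({s, t} : Finset (Fin n)).card = 2 := by
          rw [Finset.card_insert_of_notMem (by simp [hst]), Finset.card_singleton]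
        exact (Finset.eq_of_subset_of_card_le hsub2 (by rw [hE2card, hc2])).symm
      by_cases haE : a ∈ E
      · by_cases hbE : b ∈ E
        · exact Or.inl (pairEq a b hab haE hbE)
        · have hcE : c ∈ E := by
            rcases ht2E2 with rfl | rfl
            · exact absurd ht2E hbE
            · exact ht2E
          exact Or.inr (Or.inr (pairEq a c (Ne.symm hca) haE hcE))
      · have hbE : b ∈ E := by
          rcases ht1E1 with rfl | rfl
          · exact absurd ht1E haE
          · exact ht1E
        have hcE : c ∈ E := by
          rcases ht3E3 with rfl | rfl
          · exact absurd ht3E haE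
          · exact ht3E
        exact Or.inr (Or.inl (pairEq b c (Ne.symm hcb) hbE hcE))
    have := Finset.card_le_card hsub
    have h3 : (({({a,b} : Finset (Fin n)), {b,c}, {a,c}} : Finset (Finset (Fin n)))).card ≤ 3 := by
      apply le_trans (Finset.card_insert_le _ _)
      apply Nat.succ_le_succ
      apply le_trans (Finset.card_insert_le _ _)
      apply Nat.succ_le_succ
      exact le_of_eq (Finset.card_singleton _)
    omega

lemma nonstar_lt (n p : ℕ) (hp : 1 ≤ p) (hn : 13 ≤ n) (H : Finset (Finset (Fin n)))
    (hH : ∀ F ∈ H, F.card = 3) (hne : H.Nonempty)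
    (hint : ∀ A ∈ H, ∀ B ∈ H, ¬ Disjoint A B)
    (hns : ∀ x, ∃ F ∈ H, x ∉ F) :
    coP n p H < (n-1)*(n-2)^p + (n-1).choose 2 := by
  obtain ⟨q, rfl⟩ : ∃ q, p = q + 1 := ⟨p - 1, by omega⟩
  set p := q + 1 with hpdef
  have hsplit : coP n p H =
      (∑ E ∈ (Finset.univ.powersetCard 2).filter
          (fun E => 4 ≤ (H.filter (fun F => E ⊆ F)).card),
        ((H.filter (fun F => E ⊆ F)).card)^p)
      + (∑ E ∈ (Finset.univ.powersetCard 2).filter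
          (fun E => ¬ 4 ≤ (H.filter (fun F => E ⊆ F)).card),
        ((H.filter (fun F => E ⊆ F)).card)^p) := by
    rw [coP, Finset.sum_filter_add_sum_filter_not]
  have hbig : (∑ E ∈ (Finset.univ.powersetCard 2).filter
      (fun E => 4 ≤ (H.filter (fun F => E ⊆ F)).card),
      ((H.filter (fun F => E ⊆ F)).card)^p) ≤ 3*(n-2)^p := by
    calc _ ≤ ∑ E ∈ (Finset.univ.powersetCard 2).filter
          (fun E => 4 ≤ (H.filter (fun F => E ⊆ F)).card), (n-2)^p := by
          apply Finset.sum_le_sum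
          intro E hE
          apply Nat.pow_le_pow_left
          apply deg_le H hH
          rw [Finset.mem_filter, Finset.mem_powersetCard] at hE
          exact hE.1.2
      _ = ((Finset.univ.powersetCard 2).filter
          (fun E => 4 ≤ (H.filter (fun F => E ⊆ F)).card)).card * (n-2)^p := by
          rw [Finset.sum_const, smul_eq_mul]
      _ ≤ 3*(n-2)^p := Nat.mul_le_mul_right _ (Dcard n H hH hint hns)
  have hsmall : (∑ E ∈ (Finset.univ.powersetCard 2).filter
      (fun E => ¬ 4 ≤ (H.filter (fun F => E ⊆ F)).card),
      ((H.filter (fun F => E ⊆ F)).card)^p) ≤ 3^p * (5*n-14) := by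
    calc _ ≤ ∑ E ∈ (Finset.univ.powersetCard 2).filter
          (fun E => ¬ 4 ≤ (H.filter (fun F => E ⊆ F)).card),
          3^q * (H.filter (fun F => E ⊆ F)).card := by
          apply Finset.sum_le_sum
          intro E hE
          rw [Finset.mem_filter] at hE
          have h3 : (H.filter (fun F => E ⊆ F)).card ≤ 3 := by omega
          calc ((H.filter (fun F => E ⊆ F)).card)^p
              = ((H.filter (fun F => E ⊆ F)).card)^q * (H.filter (fun F => E ⊆ F)).card := by
                rw [hpdef, pow_succ]
            _ ≤ 3^q * (H.filter (fun F => E ⊆ F)).card :=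
                Nat.mul_le_mul_right _ (Nat.pow_le_pow_left h3 q)
      _ ≤ ∑ E ∈ Finset.univ.powersetCard 2, 3^q * (H.filter (fun F => E ⊆ F)).card :=
          Finset.sum_le_sum_of_subset (Finset.filter_subset _ _)
      _ = 3^q * ∑ E ∈ Finset.univ.powersetCard 2, (H.filter (fun F => E ⊆ F)).card := by
          rw [Finset.mul_sum]
      _ = 3^q * (3 * H.card) := by rw [sum_deg n H hH]
      _ ≤ 3^q * (3 * (5*n-14)) := by
          apply Nat.mul_le_mul_left
          exact Nat.mul_le_mul_left _ (card_bound n hn H hH hne hint hns)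
      _ = 3^p * (5*n-14) := by rw [hpdef, pow_succ]; ring
  have harith := arith_main n p hn (by omega)
  omega

theorem stmt_11' (n p : ℕ) (hp : 1 ≤ p) (hn : 13 ≤ n)
    (H : Finset (Finset (Fin n))) (hH : ∀ F ∈ H, F.card = 3)
    (hne : H.Nonempty)
    (hint : ∀ A ∈ H, ∀ B ∈ H, ¬ Disjoint A B) :
    coP n p H ≤ coP n p ((Finset.univ.powersetCard 3).filter
        (fun F : Finset (Fin n) => ∃ x ∈ F, (x : ℕ) < 1)) ∧
      (coP n p H = coP n p ((Finset.univ.powersetCard 3).filter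
        (fun F : Finset (Fin n) => ∃ x ∈ F, (x : ℕ) < 1)) ↔
        ∃ σ : Equiv.Perm (Fin n), H.image (Finset.image σ)
          = (Finset.univ.powersetCard 3).filter
            (fun F : Finset (Fin n) => ∃ x ∈ F, (x : ℕ) < 1)) := by
  set z0 : Fin n := ⟨0, by omega⟩ with hz0
  have hHfam : (Finset.univ.powersetCard 3).filter
      (fun F : Finset (Fin n) => ∃ x ∈ F, (x : ℕ) < 1) = starF n z0 :=
    Hfam_eq_star n hn
  rw [hHfam]
  have hrev : (∃ σ : Equiv.Perm (Fin n), H.image (Finset.image σ) = starF n z0) →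
      coP n p H = coP n p (starF n z0) := by
    rintro ⟨σ, hσ⟩
    rw [← hσ, coP_image]
  by_cases hstar : ∃ x, ∀ F ∈ H, x ∈ F
  · obtain ⟨x, hx⟩ := hstar
    have hsub : H ⊆ starF n x := by
      intro F hF
      rw [starF, Finset.mem_filter, Finset.mem_powersetCard]
      exact ⟨⟨Finset.subset_univ _, hH F hF⟩, hx F hF⟩
    have hstarval : coP n p (starF n x) = coP n p (starF n z0) := by
      rw [coP_starF n p hn x, coP_starF n p hn z0]
    have hle : coP n p H ≤ coP n p (starF n z0) := by
      rw [← hstarval]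
      exact coP_mono n p hsub
    refine ⟨hle, ?_, hrev⟩
    intro heq
    have hHeq : H = starF n x := by
      by_contra hne'
      have := coP_strict n p hp hsub
        (fun F hF => by
          rw [starF, Finset.mem_filter, Finset.mem_powersetCard] at hF
          exact hF.1.2) hne'
      rw [hstarval] at this
      omega
    refine ⟨Equiv.swap x z0, ?_⟩
    rw [hHeq, starF_image, Equiv.swap_apply_left]
  · push_neg at hstar
    have hlt : coP n p H < coP n p (starF n z0) := by
      rw [coP_starF n p hn z0]
      exact nonstar_lt n p hp hn H hH hne hint hstar
    refine ⟨le_of_lt hlt, ?_, hrev⟩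
    intro heq
    omega

theorem stmt_11 (n p : ℕ) (hp : 1 ≤ p) (hn : 13 ≤ n)
    (H : Finset (Finset (Fin n))) (hH : ∀ F ∈ H, F.card = 3)
    (hne : H.Nonempty)
    (hint : ∀ A ∈ H, ∀ B ∈ H, ¬ Disjoint A B) :
    coP n p H ≤ coP n p (Hfam n 1) ∧
      (coP n p H = coP n p (Hfam n 1) ↔
        ∃ σ : Equiv.Perm (Fin n), H.image (Finset.image σ) = Hfam n 1) := by
  have h := stmt_11' n p hp hn H hH hne hint
  unfold Hfam
  exact h
end
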